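/- arXiv:2605.22438 — 12 statements merged into one kernel-verified Lean document; each statement's English description precedes it below -/
import Mathlib

section
/- Let F_B, F_S : [0,1] → [0,1] be nondecreasing, let v ∈ [0,1], and define u_B(p) = (v − p)·F_B(p) and u_O(p) = (v − p)·F_B(p)·F_S(p) for p ∈ [0,1]. Let A_B (resp. A_O) be the set of maximizers of u_B (resp. u_O) over [0,1], and assume both are nonempty and admit greatest elements p_B^max and p_O^max. Then: (1) p_O^max ≥ p_B^max; (2) if in addition u_B(p_B^max) > 0 and F_S(p_B^max) > 0, then for every p ∈ [0, p_B^max], if p ∈ A_O then p ∈ A_B and F_S(p) = F_S(p_B^max). -/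
open Set

/-!
Write `u_O = u_B · F_S` with `F_S` nondecreasing and nonnegative. Left of the greatest maximizer
`a` of `u_B` (where `u_B a ≥ 0`), `u_B · F_S ≤ u_B(a) · F_S(a)`, so no bid below `a` can beat `a`
under shilling; and a bid below `a` that is optimal under shilling squeezes the chain
`u_B(a) F_S(a) ≤ u_B(p) F_S(p) ≤ u_B(a) F_S(p) ≤ u_B(a) F_S(a)` into equalities.
-/

section Maximizers

variable {α : Type*} [Preorder α] {s : Set α} {u g : α → ℝ} {a x : α}

theorem IsMaxOn.mul_le_of_le (hu : IsMaxOn u s a) (ha : a ∈ s) (hua : 0 ≤ u a)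
    (hg : MonotoneOn g s) (hgx : 0 ≤ g x) (hx : x ∈ s) (hxa : x ≤ a) :
    u x * g x ≤ u a * g a :=
  calc u x * g x ≤ u a * g x := mul_le_mul_of_nonneg_right (hu hx) hgx
    _ ≤ u a * g a := mul_le_mul_of_nonneg_left (hg hx ha hxa) hua

theorem IsMaxOn.eq_of_isMaxOn_mul_of_le (hu : IsMaxOn u s a) (ha : a ∈ s) (hua : 0 < u a)
    (hga : 0 < g a) (hg : MonotoneOn g s) (hg0 : ∀ x ∈ s, 0 ≤ g x) (hx : x ∈ s) (hxa : x ≤ a)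
    (hx_max : IsMaxOn (fun y => u y * g y) s x) :
    u x = u a ∧ g x = g a := by
  have hax : u a * g a ≤ u x * g x := hx_max ha
  have hgx : g x = g a := by
    refine le_antisymm (hg hx ha hxa) (le_of_mul_le_mul_left ?_ hua)
    exact hax.trans (mul_le_mul_of_nonneg_right (hu hx) (hg0 x hx))
  rw [hgx] at hax
  exact ⟨le_antisymm (hu hx) (le_of_mul_le_mul_right hax hga), hgx⟩

theorem IsGreatest.le_of_isGreatest_isMaxOn_mul {β : Type*} [LinearOrder β] {s : Set β}
    {u g : β → ℝ} {a b : β}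
    (ha : IsGreatest {p ∈ s | IsMaxOn u s p} a) (hua : 0 ≤ u a)
    (hg : MonotoneOn g s) (hg0 : ∀ x ∈ s, 0 ≤ g x)
    (hb : IsGreatest {p ∈ s | IsMaxOn (fun y => u y * g y) s p} b) :
    a ≤ b := by
  by_contra! hba
  have ha_max : IsMaxOn (fun y => u y * g y) s a := fun y hy =>
    (hb.1.2 hy).trans (ha.1.2.mul_le_of_le ha.1.1 hua hg (hg0 b hb.1.1) hb.1.1 hba.le)
  exact hba.not_ge (hb.2 ⟨ha.1.1, ha_max⟩)

end Maximizers

theorem optima_under_shilling_general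
    (FB FS : ℝ → ℝ) (v : ℝ)
    (hFSmono : MonotoneOn FS (Icc 0 1))
    (hFBrange : ∀ p ∈ Icc (0:ℝ) 1, FB p ∈ Icc (0:ℝ) 1)
    (hFSrange : ∀ p ∈ Icc (0:ℝ) 1, FS p ∈ Icc (0:ℝ) 1)
    (hv : v ∈ Icc (0:ℝ) 1)
    (uB uO : ℝ → ℝ)
    (huB : ∀ p, uB p = (v - p) * FB p)
    (huO : ∀ p, uO p = (v - p) * FB p * FS p)
    (AB AO : Set ℝ)
    (hAB : AB = {p ∈ Icc (0:ℝ) 1 | ∀ q ∈ Icc (0:ℝ) 1, uB q ≤ uB p})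
    (hAO : AO = {p ∈ Icc (0:ℝ) 1 | ∀ q ∈ Icc (0:ℝ) 1, uO q ≤ uO p})
    (pBmax pOmax : ℝ)
    (hpBmax : IsGreatest AB pBmax) (hpOmax : IsGreatest AO pOmax) :
    pBmax ≤ pOmax ∧
    (0 < uB pBmax → 0 < FS pBmax →
      ∀ p ∈ Icc (0:ℝ) pBmax, p ∈ AO → p ∈ AB ∧ FS p = FS pBmax) := by
  have huO_eq : uO = fun p => uB p * FS p := funext fun p => by rw [huO, huB]
  subst hAB hAO huO_eq
  have huB_max : IsMaxOn uB (Icc 0 1) pBmax := hpBmax.1.2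
  have hFS0 : ∀ p ∈ Icc (0:ℝ) 1, 0 ≤ FS p := fun p hp => (hFSrange p hp).1
  have hzero : (0:ℝ) ∈ Icc (0:ℝ) 1 := left_mem_Icc.mpr zero_le_one
  have huB_nonneg : 0 ≤ uB pBmax := by
    have : 0 ≤ uB 0 := by
      rw [huB, sub_zero]
      exact mul_nonneg hv.1 (hFBrange 0 hzero).1
    exact this.trans (huB_max hzero)
  refine ⟨hpBmax.le_of_isGreatest_isMaxOn_mul huB_nonneg hFSmono hFS0 hpOmax,
    fun huB_pos hFS_pos p hp hpO => ?_⟩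
  have hp_max := huB_max.eq_of_isMaxOn_mul_of_le hpBmax.1.1 huB_pos hFS_pos hFSmono hFS0
    hpO.1 hp.2 hpO.2
  exact ⟨⟨hpO.1, fun q hq => (huB_max hq).trans_eq hp_max.1.symm⟩, hp_max.2⟩

/-- **Optimal bids can only move upward under max-shilling.**
With `u_B(p) = (v - p) F_B(p)` and `u_O(p) = (v - p) F_B(p) F_S(p)`, if the sets of
maximizers over `[0,1]` admit greatest elements `p_B^max` and `p_O^max`, then
`p_O^max ≥ p_B^max`, and (under positivity of `u_B(p_B^max)` and `F_S(p_B^max)`)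
no new optimum can appear to the left of `p_B^max`. -/
theorem optima_under_shilling
    (FB FS : ℝ → ℝ) (v : ℝ)
    (hFBmono : MonotoneOn FB (Icc 0 1)) (hFSmono : MonotoneOn FS (Icc 0 1))
    (hFBrange : ∀ p ∈ Icc (0:ℝ) 1, FB p ∈ Icc (0:ℝ) 1)
    (hFSrange : ∀ p ∈ Icc (0:ℝ) 1, FS p ∈ Icc (0:ℝ) 1)
    (hv : v ∈ Icc (0:ℝ) 1)
    (uB uO : ℝ → ℝ)
    (huB : ∀ p, uB p = (v - p) * FB p)
    (huO : ∀ p, uO p = (v - p) * FB p * FS p)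
    (AB AO : Set ℝ)
    (hAB : AB = {p ∈ Icc (0:ℝ) 1 | ∀ q ∈ Icc (0:ℝ) 1, uB q ≤ uB p})
    (hAO : AO = {p ∈ Icc (0:ℝ) 1 | ∀ q ∈ Icc (0:ℝ) 1, uO q ≤ uO p})
    (pBmax pOmax : ℝ)
    (hpBmax : IsGreatest AB pBmax) (hpOmax : IsGreatest AO pOmax) :
    pBmax ≤ pOmax ∧
    (0 < uB pBmax → 0 < FS pBmax →
      ∀ p ∈ Icc (0:ℝ) pBmax, p ∈ AO → p ∈ AB ∧ FS p = FS pBmax) :=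
  optima_under_shilling_general FB FS v hFSmono hFBrange hFSrange hv uB uO huB huO AB AO hAB hAO
    pBmax pOmax hpBmax hpOmax
end

section
/- Let F_B, F_S : [0,1] → [0,1] be nondecreasing, let v ∈ [0,1], and define u_B(p) = (v − p)·F_B(p) and u_O(p) = (v − p)·F_B(p)·F_S(p) for p ∈ [0,1]. Assume: u_B has a unique maximizer p* over [0,1] with p* ∈ (0,1) and u_B(p*) > 0; F_B is differentiable at p*; F_S is differentiable at p* with F_S'(p*) > 0; and the set of maximizers of u_O over [0,1] is nonempty with greatest element p_O^max. Then p_O^max > p*. -/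
/-!
At the interior maximum `p*` of `u_B` the derivative of `u_B` vanishes, so the derivative of
`u_O = u_B · F_S` at `p*` is `u_B(p*) · F_S'(p*) > 0`; in particular `p*` is not a maximizer of
`u_O`. On the other hand, every bid `q ≤ p*` satisfies `u_O(q) ≤ u_O(p*)`, because
`u_B(q) ≤ u_B(p*)` and `F_S(q) ≤ F_S(p*)`. Hence all maximizers of `u_O` lie strictly above `p*`.
-/

open Set Filter Topology

theorem HasDerivAt.mul_of_isLocalMax {u F : ℝ → ℝ} {u' F' p : ℝ} (hu : HasDerivAt u u' p)
    (hF : HasDerivAt F F' p) (hmax : IsLocalMax u p) :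
    HasDerivAt (fun x => u x * F x) (u p * F') p := by
  have h := hu.mul hF
  rwa [hmax.hasDerivAt_eq_zero hu, zero_mul, zero_add] at h

theorem single_optimum_under_shilling_general
    (FB FS : ℝ → ℝ) (v : ℝ)
    (hFSmono : MonotoneOn FS (Icc 0 1))
    (hFSrange : ∀ p ∈ Icc (0:ℝ) 1, FS p ∈ Icc (0:ℝ) 1)
    (uB uO : ℝ → ℝ)
    (huB : ∀ p, uB p = (v - p) * FB p)
    (huO : ∀ p, uO p = (v - p) * FB p * FS p)
    (pstar : ℝ) (hpstar_mem : pstar ∈ Ioo (0:ℝ) 1)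
    (hpstar_max : ∀ q ∈ Icc (0:ℝ) 1, uB q ≤ uB pstar)
    (hupos : 0 < uB pstar)
    (fB fS : ℝ)
    (hfB : HasDerivAt FB fB pstar)
    (hfS : HasDerivAt FS fS pstar) (hfSpos : 0 < fS)
    (pOmax : ℝ)
    (hpOmax : IsGreatest {p ∈ Icc (0:ℝ) 1 | ∀ q ∈ Icc (0:ℝ) 1, uO q ≤ uO p} pOmax) :
    pstar < pOmax := by
  obtain ⟨⟨hpO_mem, hpO_max⟩, -⟩ := hpOmax
  have hIcc_nhds : Icc (0:ℝ) 1 ∈ 𝓝 pstar := Icc_mem_nhds hpstar_mem.1 hpstar_mem.2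
  have huO_eq : uO = fun p => uB p * FS p := funext fun p => by rw [huO, huB]
  have huB_deriv : HasDerivAt uB ((0 - 1) * FB pstar + (v - pstar) * fB) pstar := by
    rw [funext huB]
    exact ((hasDerivAt_const pstar v).sub (hasDerivAt_id pstar)).mul hfB
  have huB_max : IsLocalMax uB pstar := IsMaxOn.isLocalMax hpstar_max hIcc_nhds
  have huO_deriv : HasDerivAt uO (uB pstar * fS) pstar :=
    huO_eq ▸ huB_deriv.mul_of_isLocalMax hfS huB_max
  by_contra! hle
  have huO_max : IsMaxOn uO (Icc 0 1) pstar := fun q hq =>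
    (hpO_max q hq).trans <| by
      rw [huO_eq]
      exact mul_le_mul (hpstar_max pOmax hpO_mem)
        (hFSmono hpO_mem (Ioo_subset_Icc_self hpstar_mem) hle) (hFSrange pOmax hpO_mem).1 hupos.le
  exact (mul_pos hupos hfSpos).ne' ((huO_max.isLocalMax hIcc_nhds).hasDerivAt_eq_zero huO_deriv)

/-- **Strict upward shift of the optimal bid under max-shilling.**
If `u_B` has a unique maximizer `p* ∈ (0,1)` over `[0,1]` with `u_B(p*) > 0`,
`F_B` is differentiable at `p*`, and `F_S` is differentiable at `p*` with positive
derivative, then the greatest maximizer of `u_O` over `[0,1]` satisfies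
`p_O^max > p*`. -/
theorem single_optimum_under_shilling
    (FB FS : ℝ → ℝ) (v : ℝ)
    (hFBmono : MonotoneOn FB (Icc 0 1)) (hFSmono : MonotoneOn FS (Icc 0 1))
    (hFBrange : ∀ p ∈ Icc (0:ℝ) 1, FB p ∈ Icc (0:ℝ) 1)
    (hFSrange : ∀ p ∈ Icc (0:ℝ) 1, FS p ∈ Icc (0:ℝ) 1)
    (hv : v ∈ Icc (0:ℝ) 1)
    (uB uO : ℝ → ℝ)
    (huB : ∀ p, uB p = (v - p) * FB p)
    (huO : ∀ p, uO p = (v - p) * FB p * FS p)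
    (pstar : ℝ) (hpstar_mem : pstar ∈ Ioo (0:ℝ) 1)
    (hpstar_max : ∀ q ∈ Icc (0:ℝ) 1, uB q ≤ uB pstar)
    (hpstar_unique : ∀ p ∈ Icc (0:ℝ) 1, (∀ q ∈ Icc (0:ℝ) 1, uB q ≤ uB p) → p = pstar)
    (hupos : 0 < uB pstar)
    (fB fS : ℝ)
    (hfB : HasDerivAt FB fB pstar)
    (hfS : HasDerivAt FS fS pstar) (hfSpos : 0 < fS)
    (pOmax : ℝ)
    (hpOmax : IsGreatest {p ∈ Icc (0:ℝ) 1 | ∀ q ∈ Icc (0:ℝ) 1, uO q ≤ uO p} pOmax) :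
    pstar < pOmax :=
  single_optimum_under_shilling_general FB FS v hFSmono hFSrange uB uO huB huO pstar hpstar_mem
    hpstar_max hupos fB fS hfB hfS hfSpos pOmax hpOmax
end

section
/- Let F_B, F_S : [0,1] → [0,1] be nondecreasing, let v ∈ [0,1], and define u_B(p) = (v − p)·F_B(p). For λ ∈ [0,1], define G_λ(p) = λ + (1 − λ)·F_S(p) and u_λ(p) = u_B(p)·G_λ(p) for p ∈ [0,1]. Assume that for every λ ∈ [0,1] the set A_λ of maximizers of u_λ over [0,1] is nonempty and admits a greatest element p_λ^max. Then: (1) p_λ^max ≥ p_1^max for every λ ∈ [0,1]; (2) if 0 ≤ λ1 ≤ λ2 ≤ 1 then p_{λ1}^max ≥ p_{λ2}^max; consequently p_1^max ≤ p_λ^max ≤ p_0^max for every λ ∈ [0,1]. -/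
/-!
Monotone comparative statics. The weight `G_λ(p) = λ + (1 - λ) F_S(p)` is log-supermodular in
`(-λ, p)`: for `λ₁ ≤ λ₂` and `p₁ ≤ p₂` the cross difference
`G_{λ₁}(p₁) G_{λ₂}(p₂) - G_{λ₂}(p₁) G_{λ₁}(p₂) = (F_S(p₂) - F_S(p₁)) (λ₁ - λ₂)` is `≤ 0`.
Hence if a higher bid weakly beats a lower one under `u_{λ₂}`, it also does under `u_{λ₁}`,
provided the higher bid has a nonnegative base utility; at an optimum this holds because the
bid `0` earns a nonnegative payoff. So the rightmost maximizer can only move left as `λ` grows.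
-/

open Set

theorem IsGreatest.le_of_single_crossing {α β : Type*} [LinearOrder α] [Preorder β]
    {S : Set α} {f g : α → β} {a b : α}
    (ha : IsGreatest {p ∈ S | ∀ q ∈ S, f q ≤ f p} a)
    (hb : IsGreatest {p ∈ S | ∀ q ∈ S, g q ≤ g p} b)
    (hcross : a < b → g a ≤ g b → f a ≤ f b) : b ≤ a := by
  by_contra! hab
  have hb_max : b ∈ {p ∈ S | ∀ q ∈ S, f q ≤ f p} :=
    ⟨hb.1.1, fun q hq => (ha.1.2 q hq).trans (hcross hab (hb.1.2 a ha.1.1))⟩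
  exact (ha.2 hb_max).not_gt hab

section SingleCrossing

variable {R : Type*} [CommRing R] [LinearOrder R] [IsStrictOrderedRing R]

theorem mul_le_mul_of_cross_le {x₁ x₂ w₁₁ w₁₂ w₂₁ w₂₂ : R}
    (h₁₁ : 0 ≤ w₁₁) (h₁₂ : 0 ≤ w₁₂) (h₂₂ : 0 < w₂₂) (hx₂ : 0 ≤ x₂)
    (hcross : w₁₁ * w₂₂ ≤ w₂₁ * w₁₂) (h : x₁ * w₂₁ ≤ x₂ * w₂₂) :
    x₁ * w₁₁ ≤ x₂ * w₁₂ := by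
  rcases le_or_gt x₁ 0 with hx₁ | hx₁
  · exact (mul_nonpos_of_nonpos_of_nonneg hx₁ h₁₁).trans (mul_nonneg hx₂ h₁₂)
  · refine le_of_mul_le_mul_right ?_ h₂₂
    calc x₁ * w₁₁ * w₂₂ = x₁ * (w₁₁ * w₂₂) := mul_assoc _ _ _
      _ ≤ x₁ * (w₂₁ * w₁₂) := mul_le_mul_of_nonneg_left hcross hx₁.le
      _ = x₁ * w₂₁ * w₁₂ := (mul_assoc _ _ _).symm
      _ ≤ x₂ * w₂₂ * w₁₂ := mul_le_mul_of_nonneg_right h h₁₂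
      _ = x₂ * w₁₂ * w₂₂ := mul_right_comm _ _ _

theorem mixture_weight_nonneg {l F : R} (hl₀ : 0 ≤ l) (hl₁ : l ≤ 1) (hF : 0 ≤ F) :
    0 ≤ l + (1 - l) * F :=
  add_nonneg hl₀ (mul_nonneg (sub_nonneg.2 hl₁) hF)

theorem mixture_weight_pos {l F : R} (hl₀ : 0 < l) (hl₁ : l ≤ 1) (hF : 0 ≤ F) :
    0 < l + (1 - l) * F :=
  add_pos_of_pos_of_nonneg hl₀ (mul_nonneg (sub_nonneg.2 hl₁) hF)

theorem mixture_weight_cross_le {l₁ l₂ F₁ F₂ : R} (hl : l₁ ≤ l₂) (hF : F₁ ≤ F₂) :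
    (l₁ + (1 - l₁) * F₁) * (l₂ + (1 - l₂) * F₂) ≤
      (l₂ + (1 - l₂) * F₁) * (l₁ + (1 - l₁) * F₂) := by
  nlinarith [mul_nonneg (sub_nonneg.2 hl) (sub_nonneg.2 hF)]

end SingleCrossing

theorem mixture_optimum_general
    (FB FS : ℝ → ℝ) (v : ℝ)
    (hFSmono : MonotoneOn FS (Icc 0 1))
    (hFBrange : ∀ p ∈ Icc (0:ℝ) 1, FB p ∈ Icc (0:ℝ) 1)
    (hFSrange : ∀ p ∈ Icc (0:ℝ) 1, FS p ∈ Icc (0:ℝ) 1)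
    (hv : v ∈ Icc (0:ℝ) 1)
    (uB : ℝ → ℝ) (huB : ∀ p, uB p = (v - p) * FB p)
    (G : ℝ → ℝ → ℝ) (hG : ∀ lam p, G lam p = lam + (1 - lam) * FS p)
    (u : ℝ → ℝ → ℝ) (hu : ∀ lam p, u lam p = uB p * G lam p)
    (pmax : ℝ → ℝ)
    (hpmax : ∀ lam ∈ Icc (0:ℝ) 1,
      IsGreatest {p ∈ Icc (0:ℝ) 1 | ∀ q ∈ Icc (0:ℝ) 1, u lam q ≤ u lam p} (pmax lam)) :
    (∀ lam ∈ Icc (0:ℝ) 1, pmax 1 ≤ pmax lam) ∧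
    (∀ lam1 lam2 : ℝ, 0 ≤ lam1 → lam1 ≤ lam2 → lam2 ≤ 1 → pmax lam2 ≤ pmax lam1) ∧
    (∀ lam ∈ Icc (0:ℝ) 1, pmax 1 ≤ pmax lam ∧ pmax lam ≤ pmax 0) := by
  have h0 : (0:ℝ) ∈ Icc (0:ℝ) 1 := ⟨le_rfl, zero_le_one⟩
  have hu_zero_nonneg : ∀ lam ∈ Icc (0:ℝ) 1, 0 ≤ u lam 0 := fun lam hlam => by
    rw [hu, huB, hG, sub_zero]
    exact mul_nonneg (mul_nonneg hv.1 (hFBrange 0 h0).1)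
      (mixture_weight_nonneg hlam.1 hlam.2 (hFSrange 0 h0).1)
  have hanti : ∀ lam1 lam2 : ℝ, 0 ≤ lam1 → lam1 ≤ lam2 → lam2 ≤ 1 → pmax lam2 ≤ pmax lam1 := by
    intro l₁ l₂ hl₁₀ hl₁₂ hl₂₁
    rcases hl₁₂.eq_or_lt with rfl | hlt
    · exact le_rfl
    have hl₁ : l₁ ∈ Icc (0:ℝ) 1 := ⟨hl₁₀, hl₁₂.trans hl₂₁⟩
    have hl₂ : l₂ ∈ Icc (0:ℝ) 1 := ⟨hl₁₀.trans hl₁₂, hl₂₁⟩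
    obtain ⟨⟨hp₁, -⟩, -⟩ := hpmax l₁ hl₁
    obtain ⟨⟨hp₂, hp₂_max⟩, -⟩ := hpmax l₂ hl₂
    refine (hpmax l₁ hl₁).le_of_single_crossing (hpmax l₂ hl₂) fun hp₁₂ hbeats => ?_
    have hopt_nonneg : 0 ≤ u l₂ (pmax l₂) := (hu_zero_nonneg l₂ hl₂).trans (hp₂_max 0 h0)
    have hw₂₂ := mixture_weight_pos (hl₁₀.trans_lt hlt) hl₂₁ (hFSrange _ hp₂).1
    rw [hu, hu, hG, hG] at hbeats ⊢
    rw [hu, hG] at hopt_nonneg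
    exact mul_le_mul_of_cross_le (mixture_weight_nonneg hl₁₀ hl₁.2 (hFSrange _ hp₁).1)
      (mixture_weight_nonneg hl₁₀ hl₁.2 (hFSrange _ hp₂).1) hw₂₂
      (nonneg_of_mul_nonneg_left hopt_nonneg hw₂₂)
      (mixture_weight_cross_le hl₁₂ (hFSmono hp₁ hp₂ hp₁₂.le)) hbeats
  exact ⟨fun lam hlam => hanti lam 1 hlam.1 hlam.2 le_rfl, hanti, fun lam hlam =>
    ⟨hanti lam 1 hlam.1 hlam.2 le_rfl, hanti 0 lam le_rfl hlam.1 hlam.2⟩⟩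

/-- **Monotonicity of the rightmost optimal bid under mixture contamination.**
With `u_λ(p) = (v - p) F_B(p) (λ + (1-λ) F_S(p))`, if for each `λ ∈ [0,1]` the set of
maximizers of `u_λ` over `[0,1]` has a greatest element `pmax λ`, then `pmax λ ≥ pmax 1`
for all `λ ∈ [0,1]`, `pmax` is antitone on `[0,1]`, and `pmax 1 ≤ pmax λ ≤ pmax 0`. -/
theorem mixture_optimum
    (FB FS : ℝ → ℝ) (v : ℝ)
    (hFBmono : MonotoneOn FB (Icc 0 1)) (hFSmono : MonotoneOn FS (Icc 0 1))
    (hFBrange : ∀ p ∈ Icc (0:ℝ) 1, FB p ∈ Icc (0:ℝ) 1)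
    (hFSrange : ∀ p ∈ Icc (0:ℝ) 1, FS p ∈ Icc (0:ℝ) 1)
    (hv : v ∈ Icc (0:ℝ) 1)
    (uB : ℝ → ℝ) (huB : ∀ p, uB p = (v - p) * FB p)
    (G : ℝ → ℝ → ℝ) (hG : ∀ lam p, G lam p = lam + (1 - lam) * FS p)
    (u : ℝ → ℝ → ℝ) (hu : ∀ lam p, u lam p = uB p * G lam p)
    (pmax : ℝ → ℝ)
    (hpmax : ∀ lam ∈ Icc (0:ℝ) 1,
      IsGreatest {p ∈ Icc (0:ℝ) 1 | ∀ q ∈ Icc (0:ℝ) 1, u lam q ≤ u lam p} (pmax lam)) :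
    (∀ lam ∈ Icc (0:ℝ) 1, pmax 1 ≤ pmax lam) ∧
    (∀ lam1 lam2 : ℝ, 0 ≤ lam1 → lam1 ≤ lam2 → lam2 ≤ 1 → pmax lam2 ≤ pmax lam1) ∧
    (∀ lam ∈ Icc (0:ℝ) 1, pmax 1 ≤ pmax lam ∧ pmax lam ≤ pmax 0) :=
  mixture_optimum_general FB FS v hFSmono hFBrange hFSrange hv uB huB G hG u hu pmax hpmax
end

section
/- Let F_B, F_S : [0,1] → [0,1] be nondecreasing, let v ∈ [0,1], and define u_B(p) = (v − p)·F_B(p), G_λ(p) = λ + (1 − λ)·F_S(p), and u_λ(p) = u_B(p)·G_λ(p) for p ∈ [0,1] and λ ∈ [0,1]. Assume that for every λ ∈ [0,1] the function u_λ has a unique maximizer p_λ* over [0,1]. Then for all 0 ≤ λ1 ≤ λ2 ≤ 1 one has p_{λ1}* ≥ p_{λ2}*; in particular p_1* ≤ p_λ* ≤ p_0* for every λ ∈ [0,1]. -/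
/-!
Raising the contamination `λ` multiplies `u_λ` by a factor `G_μ / G_λ` that is nonincreasing in the
price, because `G_λ(p) G_μ(q) ≤ G_μ(p) G_λ(q)` for `λ ≤ μ`, `p ≤ q`. Hence if a higher price `q` is
optimal at the larger contamination `μ`, it is weakly preferred to any lower price at `λ`; were the
optimizer to move up with `λ`, the optimum at `μ` would also be optimal at `λ`, against uniqueness.
The sign of `u_B` at that optimum, needed to compare the products, comes from `u_μ(0) ≥ 0`.
-/

open Set

theorem mul_le_mul_of_mul_le_mul_of_cross {a b x₁ x₂ y₁ y₂ : ℝ} (hb : 0 ≤ b) (hx₁ : 0 ≤ x₁)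
    (hx₂ : 0 ≤ x₂) (hy₂ : 0 < y₂) (hcross : x₁ * y₂ ≤ y₁ * x₂) (h : a * y₁ ≤ b * y₂) :
    a * x₁ ≤ b * x₂ := by
  by_contra! hlt
  have ha : 0 ≤ a := by
    by_contra! ha
    nlinarith [mul_nonneg hb hx₂, mul_nonpos_of_nonpos_of_nonneg ha.le hx₁]
  have : x₂ * (b * y₂) < x₂ * (a * y₁) :=
    calc x₂ * (b * y₂) = b * x₂ * y₂ := by ring
      _ < a * x₁ * y₂ := mul_lt_mul_of_pos_right hlt hy₂
      _ = a * (x₁ * y₂) := by ring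
      _ ≤ a * (y₁ * x₂) := mul_le_mul_of_nonneg_left hcross ha
      _ = x₂ * (a * y₁) := by ring
  exact this.not_ge (mul_le_mul_of_nonneg_left h hx₂)

section SingleCrossing

variable {ι α β : Type*}

/-- Single crossing in the decreasing direction (larger parameters favour lower actions), demanded
only where the higher action is optimal at the larger parameter. -/
def SingleCrossingOn [Preorder ι] [Preorder α] [Preorder β]
    (f : ι → α → β) (I : Set ι) (S : Set α) : Prop :=
  ∀ i ∈ I, ∀ j ∈ I, i < j → ∀ p ∈ S, ∀ q ∈ S, p < q → IsMaxOn (f j) S q → f i p ≤ f i q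

theorem SingleCrossingOn.antitoneOn_of_isMaxOn_unique [PartialOrder ι] [LinearOrder α]
    [Preorder β] {f : ι → α → β} {I : Set ι} {S : Set α} {x : ι → α}
    (hf : SingleCrossingOn f I S) (hmem : ∀ i ∈ I, x i ∈ S)
    (hmax : ∀ i ∈ I, IsMaxOn (f i) S (x i))
    (hunique : ∀ i ∈ I, ∀ p ∈ S, IsMaxOn (f i) S p → p = x i) :
    AntitoneOn x I := by
  intro i hi j hj hij
  by_contra! hlt
  obtain hij | rfl := hij.lt_or_eq
  · have hpref : f i (x i) ≤ f i (x j) :=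
      hf i hi j hj hij (x i) (hmem i hi) (x j) (hmem j hj) hlt (hmax j hj)
    have hjmax : IsMaxOn (f i) S (x j) :=
      isMaxOn_iff.2 fun q hq => (isMaxOn_iff.1 (hmax i hi) q hq).trans hpref
    exact hlt.ne' (hunique i hi (x j) (hmem j hj) hjmax)
  · exact lt_irrefl _ hlt

theorem singleCrossingOn_mul [Preorder ι] [Preorder α] {h : α → ℝ} {g : ι → α → ℝ}
    {I : Set ι} {S : Set α} {p₀ : α} (hp₀ : p₀ ∈ S) (hhp₀ : 0 ≤ h p₀)
    (hg : ∀ i ∈ I, ∀ p ∈ S, 0 ≤ g i p) (hg_pos : ∀ i ∈ I, ∀ j ∈ I, i < j → ∀ p ∈ S, 0 < g j p)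
    (hg_cross : ∀ i ∈ I, ∀ j ∈ I, i < j → ∀ p ∈ S, ∀ q ∈ S, p < q →
      g i p * g j q ≤ g j p * g i q) :
    SingleCrossingOn (fun i p => h p * g i p) I S := by
  intro i hi j hj hij p hp q hq hpq hmax
  have hmax' := isMaxOn_iff.1 hmax
  have hhq : 0 ≤ h q := by
    refine nonneg_of_mul_nonneg_left ?_ (hg_pos i hi j hj hij q hq)
    exact (mul_nonneg hhp₀ (hg j hj p₀ hp₀)).trans (hmax' p₀ hp₀)
  exact mul_le_mul_of_mul_le_mul_of_cross hhq (hg i hi p hp) (hg i hi q hq)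
    (hg_pos i hi j hj hij q hq) (hg_cross i hi j hj hij p hp q hq hpq) (hmax' p hp)

end SingleCrossing

section Mixture

variable {lam mu s t : ℝ}

theorem mixture_nonneg (hlam : lam ∈ Icc (0 : ℝ) 1) (hs : 0 ≤ s) : 0 ≤ lam + (1 - lam) * s := by
  have := sub_nonneg.2 hlam.2
  have := hlam.1
  positivity

theorem mixture_pos (hlam : 0 < lam) (hlam1 : lam ≤ 1) (hs : 0 ≤ s) :
    0 < lam + (1 - lam) * s := by
  have := sub_nonneg.2 hlam1
  positivity

theorem mixture_mul_mixture_le (hlm : lam ≤ mu) (hst : s ≤ t) :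
    (lam + (1 - lam) * s) * (mu + (1 - mu) * t) ≤ (mu + (1 - mu) * s) * (lam + (1 - lam) * t) := by
  nlinarith [mul_nonneg (sub_nonneg.2 hlm) (sub_nonneg.2 hst)]

end Mixture

theorem mixture_single_peaked_general
    (FB FS : ℝ → ℝ) (v : ℝ)
    (hFSmono : MonotoneOn FS (Icc 0 1))
    (hFBrange : ∀ p ∈ Icc (0:ℝ) 1, FB p ∈ Icc (0:ℝ) 1)
    (hFSrange : ∀ p ∈ Icc (0:ℝ) 1, FS p ∈ Icc (0:ℝ) 1)
    (hv : v ∈ Icc (0:ℝ) 1)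
    (uB : ℝ → ℝ) (huB : ∀ p, uB p = (v - p) * FB p)
    (G : ℝ → ℝ → ℝ) (hG : ∀ lam p, G lam p = lam + (1 - lam) * FS p)
    (u : ℝ → ℝ → ℝ) (hu : ∀ lam p, u lam p = uB p * G lam p)
    (pstar : ℝ → ℝ)
    (hpstar_mem : ∀ lam ∈ Icc (0:ℝ) 1, pstar lam ∈ Icc (0:ℝ) 1)
    (hpstar_max : ∀ lam ∈ Icc (0:ℝ) 1, ∀ q ∈ Icc (0:ℝ) 1, u lam q ≤ u lam (pstar lam))
    (hpstar_unique : ∀ lam ∈ Icc (0:ℝ) 1, ∀ p ∈ Icc (0:ℝ) 1,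
      (∀ q ∈ Icc (0:ℝ) 1, u lam q ≤ u lam p) → p = pstar lam) :
    (∀ lam1 lam2 : ℝ, 0 ≤ lam1 → lam1 ≤ lam2 → lam2 ≤ 1 → pstar lam2 ≤ pstar lam1) ∧
    (∀ lam ∈ Icc (0:ℝ) 1, pstar 1 ≤ pstar lam ∧ pstar lam ≤ pstar 0) := by
  obtain rfl : u = fun lam p => uB p * G lam p := funext fun lam => funext (hu lam)
  have h0 : (0 : ℝ) ∈ Icc (0 : ℝ) 1 := ⟨le_rfl, zero_le_one⟩
  have h1 : (1 : ℝ) ∈ Icc (0 : ℝ) 1 := ⟨zero_le_one, le_rfl⟩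
  have hcross : SingleCrossingOn (fun lam p => uB p * G lam p) (Icc 0 1) (Icc 0 1) := by
    refine singleCrossingOn_mul h0 ?_ ?_ ?_ ?_
    · rw [huB, sub_zero]
      exact mul_nonneg hv.1 (hFBrange 0 h0).1
    · intro i hi p hp
      rw [hG]
      exact mixture_nonneg hi (hFSrange p hp).1
    · intro i hi j hj hij p hp
      rw [hG]
      exact mixture_pos (hi.1.trans_lt hij) hj.2 (hFSrange p hp).1
    · intro i _ j _ hij p hp q hq hpq
      simp only [hG]
      exact mixture_mul_mixture_le hij.le (hFSmono hp hq hpq.le)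
  have hanti : AntitoneOn pstar (Icc 0 1) :=
    hcross.antitoneOn_of_isMaxOn_unique hpstar_mem
      (fun lam hlam => isMaxOn_iff.2 (hpstar_max lam hlam))
      (fun lam hlam p hp hmax => hpstar_unique lam hlam p hp (isMaxOn_iff.1 hmax))
  refine ⟨fun lam1 lam2 h0le h12 h21 => hanti ⟨h0le, h12.trans h21⟩ ⟨h0le.trans h12, h21⟩ h12,
    fun lam hlam => ⟨hanti hlam h1 hlam.2, hanti h0 hlam hlam.1⟩⟩

/-- **Single-peaked case: the unique optimizer moves monotonically with contamination.**
With `u_λ(p) = (v - p) F_B(p) (λ + (1-λ) F_S(p))`, if for each `λ ∈ [0,1]` the function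
`u_λ` has a unique maximizer `pstar λ` over `[0,1]`, then `pstar` is antitone on `[0,1]`;
in particular `pstar 1 ≤ pstar λ ≤ pstar 0` for every `λ ∈ [0,1]`. -/
theorem mixture_single_peaked
    (FB FS : ℝ → ℝ) (v : ℝ)
    (hFBmono : MonotoneOn FB (Icc 0 1)) (hFSmono : MonotoneOn FS (Icc 0 1))
    (hFBrange : ∀ p ∈ Icc (0:ℝ) 1, FB p ∈ Icc (0:ℝ) 1)
    (hFSrange : ∀ p ∈ Icc (0:ℝ) 1, FS p ∈ Icc (0:ℝ) 1)
    (hv : v ∈ Icc (0:ℝ) 1)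
    (uB : ℝ → ℝ) (huB : ∀ p, uB p = (v - p) * FB p)
    (G : ℝ → ℝ → ℝ) (hG : ∀ lam p, G lam p = lam + (1 - lam) * FS p)
    (u : ℝ → ℝ → ℝ) (hu : ∀ lam p, u lam p = uB p * G lam p)
    (pstar : ℝ → ℝ)
    (hpstar_mem : ∀ lam ∈ Icc (0:ℝ) 1, pstar lam ∈ Icc (0:ℝ) 1)
    (hpstar_max : ∀ lam ∈ Icc (0:ℝ) 1, ∀ q ∈ Icc (0:ℝ) 1, u lam q ≤ u lam (pstar lam))
    (hpstar_unique : ∀ lam ∈ Icc (0:ℝ) 1, ∀ p ∈ Icc (0:ℝ) 1,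
      (∀ q ∈ Icc (0:ℝ) 1, u lam q ≤ u lam p) → p = pstar lam) :
    (∀ lam1 lam2 : ℝ, 0 ≤ lam1 → lam1 ≤ lam2 → lam2 ≤ 1 → pstar lam2 ≤ pstar lam1) ∧
    (∀ lam ∈ Icc (0:ℝ) 1, pstar 1 ≤ pstar lam ∧ pstar lam ≤ pstar 0) :=
  mixture_single_peaked_general FB FS v hFSmono hFBrange hFSrange hv uB huB G hG u hu pstar
    hpstar_mem hpstar_max hpstar_unique
end

section
/- Let F_B : [0,1] → ℝ be nondecreasing and continuous on [0,1], differentiable on (0,1), with F_B(0) = 0, and with F_B(p) > 0 and F_B'(p) > 0 for every p ∈ (0,1). Suppose the map φ(p) = p + F_B(p)/F_B'(p) is nondecreasing on (0,1). Then for every v ∈ [0,1] and every α ∈ ℝ, the set {p ∈ [0,1] : (v − p)·F_B(p) ≥ α} is order-convex: if p1 ≤ p ≤ p2 with p1 and p2 in the set, then p is in the set (in particular the set is an interval, possibly empty). -/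
open Set

/-- **Weak RHR condition implies interval upper level sets of the utility.**
If `F_B` is nondecreasing and continuous on `[0,1]`, differentiable with positive value
and positive derivative on `(0,1)`, `F_B(0) = 0`, and `p ↦ p + F_B(p)/F_B'(p)` is
nondecreasing on `(0,1)`, then for every `v ∈ [0,1]` and level `α`, the upper level set
`{p ∈ [0,1] : (v - p) F_B(p) ≥ α}` is order-convex. -/
theorem rhr_implies_interval_level_sets
    (FB : ℝ → ℝ)
    (hmono : MonotoneOn FB (Icc 0 1))
    (hcont : ContinuousOn FB (Icc 0 1))
    (hdiff : ∀ p ∈ Ioo (0:ℝ) 1, DifferentiableAt ℝ FB p)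
    (h0 : FB 0 = 0)
    (hpos : ∀ p ∈ Ioo (0:ℝ) 1, 0 < FB p)
    (hderiv_pos : ∀ p ∈ Ioo (0:ℝ) 1, 0 < deriv FB p)
    (hphi : MonotoneOn (fun p => p + FB p / deriv FB p) (Ioo 0 1)) :
    ∀ v ∈ Icc (0:ℝ) 1, ∀ α : ℝ,
      ∀ p1 p p2 : ℝ,
        p1 ∈ {p ∈ Icc (0:ℝ) 1 | α ≤ (v - p) * FB p} →
        p2 ∈ {p ∈ Icc (0:ℝ) 1 | α ≤ (v - p) * FB p} →
        p1 ≤ p → p ≤ p2 →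
        p ∈ {p ∈ Icc (0:ℝ) 1 | α ≤ (v - p) * FB p} := by
  intro v hv α p1 p p2 hp1 hp2 h1 h2
  obtain ⟨⟨hp10, hp11⟩, hu1⟩ := hp1
  obtain ⟨⟨hp20, hp21⟩, hu2⟩ := hp2
  have hpIcc : p ∈ Icc (0:ℝ) 1 := ⟨le_trans hp10 h1, le_trans h2 hp21⟩
  refine ⟨hpIcc, ?_⟩
  -- trivial cases
  rcases eq_or_lt_of_le h1 with rfl | h1
  · exact hu1
  rcases eq_or_lt_of_le h2 with rfl | h2
  · exact hu2
  have hpIoo : p ∈ Ioo (0:ℝ) 1 := ⟨lt_of_le_of_lt hp10 h1, lt_of_lt_of_le h2 hp21⟩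
  -- utility function and its derivative
  set u : ℝ → ℝ := fun q => (v - q) * FB q with hu
  have hucont : ContinuousOn u (Icc 0 1) :=
    (continuousOn_const.sub continuousOn_id).mul hcont
  have hud : ∀ q ∈ Ioo (0:ℝ) 1, HasDerivAt u ((v - q) * deriv FB q - FB q) q := by
    intro q hq
    have h1 : HasDerivAt (fun x : ℝ => v - x) (-1) q := by
      simpa using (hasDerivAt_id q).const_sub v
    have h2 : HasDerivAt FB (deriv FB q) q := (hdiff q hq).hasDerivAt
    have : HasDerivAt (fun x => (v - x) * FB x) (-1 * FB q + (v - q) * deriv FB q) q :=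
      h1.mul h2
    convert this using 1
    ring
  by_cases hc : v ≤ p + FB p / deriv FB p
  · -- u is antitone on [p, p2]
    have hanti : AntitoneOn u (Icc p p2) := by
      apply antitoneOn_of_deriv_nonpos (convex_Icc p p2)
        (hucont.mono (Icc_subset_Icc hpIcc.1 hp21))
      · intro q hq
        rw [interior_Icc] at hq
        have hqIoo : q ∈ Ioo (0:ℝ) 1 :=
          ⟨lt_trans hpIoo.1 hq.1, lt_of_lt_of_le hq.2 hp21⟩
        exact (hud q hqIoo).differentiableAt.differentiableWithinAt
      · intro q hq
        rw [interior_Icc] at hq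
        have hqIoo : q ∈ Ioo (0:ℝ) 1 :=
          ⟨lt_trans hpIoo.1 hq.1, lt_of_lt_of_le hq.2 hp21⟩
        rw [(hud q hqIoo).deriv]
        have hφ : p + FB p / deriv FB p ≤ q + FB q / deriv FB q :=
          hphi hpIoo hqIoo hq.1.le
        have hd : 0 < deriv FB q := hderiv_pos q hqIoo
        have hle : v - q ≤ FB q / deriv FB q := by linarith
        have key := mul_le_mul_of_nonneg_right hle hd.le
        rw [div_mul_cancel₀ _ hd.ne'] at key
        linarith
    have : u p2 ≤ u p := hanti ⟨le_refl p, h2.le⟩ ⟨h2.le, le_refl p2⟩ h2.le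
    exact le_trans hu2 this
  · -- u is monotone on [p1, p]
    push_neg at hc
    have hmonu : MonotoneOn u (Icc p1 p) := by
      apply monotoneOn_of_deriv_nonneg (convex_Icc p1 p)
        (hucont.mono (Icc_subset_Icc hp10 hpIcc.2))
      · intro q hq
        rw [interior_Icc] at hq
        have hqIoo : q ∈ Ioo (0:ℝ) 1 :=
          ⟨lt_of_le_of_lt hp10 hq.1, lt_trans hq.2 hpIoo.2⟩
        exact (hud q hqIoo).differentiableAt.differentiableWithinAt
      · intro q hq
        rw [interior_Icc] at hq
        have hqIoo : q ∈ Ioo (0:ℝ) 1 :=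
          ⟨lt_of_le_of_lt hp10 hq.1, lt_trans hq.2 hpIoo.2⟩
        rw [(hud q hqIoo).deriv]
        have hφ : q + FB q / deriv FB q ≤ p + FB p / deriv FB p :=
          hphi hqIoo hpIoo hq.2.le
        have hd : 0 < deriv FB q := hderiv_pos q hqIoo
        have hlt : FB q / deriv FB q < v - q := by linarith
        nlinarith [mul_lt_mul_of_pos_right hlt hd,
          div_mul_cancel₀ (FB q) hd.ne']
    have : u p1 ≤ u p := hmonu ⟨le_refl p1, h1.le⟩ ⟨h1.le, le_refl p⟩ h1.le
    exact le_trans hu1 this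
end

section
/- Let B and S be independent real random variables on a probability space, with CDFs F_B and F_S. Let p ≤ q be real numbers with F_S(q) > 0, and define the random variable Y = 1{B ≤ p} + 1{B > p}·1{max(B,S) ≤ q}/F_S(q). Then E[Y] = F_B(q). -/
open MeasureTheory ProbabilityTheory

/-- **Suffix debiasing identity.**
For independent real random variables `B` and `S` with CDFs `F_B`, `F_S`, `p ≤ q`
and `F_S(q) > 0`, the debiased suffix observation
`Y = 1{B ≤ p} + 1{B > p}·1{max(B,S) ≤ q}/F_S(q)` satisfies `E[Y] = F_B(q)`. -/
theorem suffix_debiasing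
    {Ω : Type*} [MeasurableSpace Ω] (μ : Measure Ω) [IsProbabilityMeasure μ]
    (B S : Ω → ℝ) (hB : Measurable B) (hS : Measurable S)
    (hBS : IndepFun B S μ)
    (FB FS : ℝ → ℝ)
    (hFB : ∀ t, FB t = (μ {ω | B ω ≤ t}).toReal)
    (hFS : ∀ t, FS t = (μ {ω | S ω ≤ t}).toReal)
    (p q : ℝ) (hpq : p ≤ q) (hFSq : 0 < FS q)
    (Y : Ω → ℝ)
    (hY : ∀ ω, Y ω = (if B ω ≤ p then (1:ℝ) else 0) +
      (if p < B ω then (1:ℝ) else 0) *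
        (if max (B ω) (S ω) ≤ q then (1:ℝ) else 0) / FS q) :
    ∫ ω, Y ω ∂μ = FB q := by
  -- sets
  set A : Set Ω := B ⁻¹' Set.Iic p with hA
  set C : Set Ω := (B ⁻¹' Set.Ioc p q) ∩ (S ⁻¹' Set.Iic q) with hC
  have hAm : MeasurableSet A := hB measurableSet_Iic
  have hCm : MeasurableSet C :=
    (hB measurableSet_Ioc).inter (hS measurableSet_Iic)
  -- rewrite Y
  have hYeq : ∀ ω, Y ω = A.indicator (fun _ => (1:ℝ)) ω
      + C.indicator (fun _ => (1:ℝ)) ω / FS q := by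
    intro ω
    rw [hY ω]
    by_cases h1 : B ω ≤ p
    · simp [Set.indicator, hA, hC, h1, not_lt.mpr h1]
    · push_neg at h1
      by_cases h2 : max (B ω) (S ω) ≤ q
      · have hBq : B ω ≤ q := le_trans (le_max_left _ _) h2
        have hSq : S ω ≤ q := le_trans (le_max_right _ _) h2
        simp [Set.indicator, hA, hC, h1, h2, hBq, hSq, not_le.mpr h1]
      · have h2' : ¬ (B ω ≤ q ∧ S ω ≤ q) := by rwa [sup_le_iff] at h2
        simp [Set.indicator, hA, hC, h1, h2, h2', not_le.mpr h1, Set.mem_Ioc, Set.mem_Iic]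
  have hint : ∫ ω, Y ω ∂μ = (μ A).toReal + (μ C).toReal / FS q := by
    rw [integral_congr_ae (Filter.Eventually.of_forall hYeq)]
    have hiA : Integrable (A.indicator (fun _ => (1:ℝ))) μ :=
      (integrable_const (1:ℝ)).indicator hAm
    have hiC : Integrable (fun ω => C.indicator (fun _ => (1:ℝ)) ω / FS q) μ :=
      ((integrable_const (1:ℝ)).indicator hCm).div_const _
    rw [integral_add hiA hiC, integral_div, integral_indicator_const _ hAm,
      integral_indicator_const _ hCm]
    simp [Measure.real_def]
  -- independence
  have hCmeas : μ C = μ (B ⁻¹' Set.Ioc p q) * μ (S ⁻¹' Set.Iic q) :=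
    hBS.measure_inter_preimage_eq_mul _ _ measurableSet_Ioc measurableSet_Iic
  have hSne : μ (S ⁻¹' Set.Iic q) ≠ 0 := by
    intro h
    rw [hFS q] at hFSq
    have : {ω | S ω ≤ q} = S ⁻¹' Set.Iic q := rfl
    rw [this, h] at hFSq
    simp at hFSq
  have hfin : ∀ (s : Set Ω), μ s ≠ ⊤ := fun s => (measure_lt_top μ s).ne
  have hCval : (μ C).toReal / FS q = (μ (B ⁻¹' Set.Ioc p q)).toReal := by
    rw [hCmeas, ENNReal.toReal_mul, hFS q]
    have : {ω | S ω ≤ q} = S ⁻¹' Set.Iic q := rfl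
    rw [this]
    rw [mul_div_assoc, div_self, mul_one]
    exact ENNReal.toReal_ne_zero.mpr ⟨hSne, hfin _⟩
  -- Ioc measure
  have hsplit : μ (B ⁻¹' Set.Iic q) = μ A + μ (B ⁻¹' Set.Ioc p q) := by
    rw [hA, ← measure_union _ (hB measurableSet_Ioc)]
    · congr 1
      rw [← Set.preimage_union, Set.Iic_union_Ioc_eq_Iic hpq]
    · exact Set.disjoint_left.mpr fun ω h1 h2 => absurd h2.1 (not_lt.mpr h1)
  have hIoc : (μ (B ⁻¹' Set.Ioc p q)).toReal = FB q - FB p := by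
    rw [hFB q, hFB p]
    have h1 : {ω | B ω ≤ q} = B ⁻¹' Set.Iic q := rfl
    have h2 : {ω | B ω ≤ p} = A := rfl
    rw [h1, h2, hsplit, ENNReal.toReal_add (hfin _) (hfin _)]
    ring
  rw [hint, hCval, hIoc, hFB p]
  have h2 : {ω | B ω ≤ p} = A := rfl
  rw [h2]
  ring
end

section
/- Let A be a nonempty finite set, u : A → ℝ a function, and p* ∈ A a maximizer of u over A. Define Δ(q,p) = u(q) − u(p). Let Δ̂ : A × A → ℝ, and let r ≥ 0, c_rad ≥ 0, c_el > c_rad, and an integer m ≥ 0 satisfy: |Δ̂(q,p) − Δ(q,p)| ≤ r for all p, q ∈ A, and r ≤ c_rad·2^{−(m+1)}. Say p ∈ A is eliminated if there exists q ∈ A with Δ̂(q,p) > c_el·2^{−(m+1)}. Then p* is not eliminated, and every p ∈ A that is not eliminated satisfies u(p*) − u(p) ≤ (c_el + c_rad)·2^{−(m+1)}. -/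
section Elimination

variable {A : Type*} (u : A → ℝ) (Dhat : A → A → ℝ) {r τ : ℝ}

theorem not_exists_estimate_gt_of_isMax {pstar : A} (hpstar : ∀ q, u q ≤ u pstar)
    (hconc : ∀ q, |Dhat q pstar - (u q - u pstar)| ≤ r) (hτ : r ≤ τ) :
    ¬ ∃ q, Dhat q pstar > τ := by
  rintro ⟨q, hq⟩
  linarith [(abs_le.mp (hconc q)).2, hpstar q]

theorem sub_le_of_not_exists_estimate_gt {pstar p : A}
    (hconc : |Dhat pstar p - (u pstar - u p)| ≤ r) (hp : ¬ ∃ q, Dhat q p > τ) :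
    u pstar - u p ≤ τ + r := by
  have hsurvive : Dhat pstar p ≤ τ := not_lt.mp fun h ↦ hp ⟨pstar, h⟩
  linarith [(abs_le.mp hconc).1]

end Elimination

theorem safe_elimination_general
    {A : Type*}
    (u : A → ℝ) (pstar : A) (hpstar : ∀ p : A, u p ≤ u pstar)
    (Dhat : A → A → ℝ) (r crad cel : ℝ) (m : ℕ)
    (hcel : crad < cel)
    (hconc : ∀ p q : A, |Dhat q p - (u q - u p)| ≤ r)
    (hrad : r ≤ crad * (2:ℝ) ^ (-(m + 1 : ℤ))) :
    ¬ (∃ q : A, Dhat q pstar > cel * (2:ℝ) ^ (-(m + 1 : ℤ))) ∧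
    (∀ p : A, ¬ (∃ q : A, Dhat q p > cel * (2:ℝ) ^ (-(m + 1 : ℤ))) →
      u pstar - u p ≤ (cel + crad) * (2:ℝ) ^ (-(m + 1 : ℤ))) := by
  set ε : ℝ := (2:ℝ) ^ (-(m + 1 : ℤ))
  have hradius : r ≤ cel * ε := hrad.trans (by gcongr)
  refine ⟨not_exists_estimate_gt_of_isMax u Dhat hpstar (hconc pstar) hradius, fun p hp ↦ ?_⟩
  calc u pstar - u p ≤ cel * ε + r := sub_le_of_not_exists_estimate_gt u Dhat (hconc p pstar) hp
    _ ≤ (cel + crad) * ε := by linarith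

/-- **Safe elimination.**
If the gap estimator `Δ̂` is uniformly within `r ≤ c_rad·2^{-(m+1)}` of the true
gaps `Δ(q,p) = u(q) − u(p)` and elimination removes `p` only when some `q` has
`Δ̂(q,p) > c_el·2^{-(m+1)}` with `c_el > c_rad`, then the maximizer `p*` survives
and every survivor is `(c_el + c_rad)·2^{-(m+1)}`-optimal. -/
theorem safe_elimination
    {A : Type*} [Fintype A] [Nonempty A]
    (u : A → ℝ) (pstar : A) (hpstar : ∀ p : A, u p ≤ u pstar)
    (Dhat : A → A → ℝ) (r crad cel : ℝ) (m : ℕ)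
    (hr : 0 ≤ r) (hcrad : 0 ≤ crad) (hcel : crad < cel)
    (hconc : ∀ p q : A, |Dhat q p - (u q - u p)| ≤ r)
    (hrad : r ≤ crad * (2:ℝ) ^ (-(m + 1 : ℤ))) :
    ¬ (∃ q : A, Dhat q pstar > cel * (2:ℝ) ^ (-(m + 1 : ℤ))) ∧
    (∀ p : A, ¬ (∃ q : A, Dhat q p > cel * (2:ℝ) ^ (-(m + 1 : ℤ))) →
      u pstar - u p ≤ (cel + crad) * (2:ℝ) ^ (-(m + 1 : ℤ))) :=
  safe_elimination_general u pstar hpstar Dhat r crad cel m hcel hconc hrad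
end

section
/- There exists a universal constant C > 0 such that the following holds. Let k ≥ 2 be an integer, let D be the (k−1)×k real matrix with entries D_{j,j} = −1, D_{j,j+1} = 1 and all other entries 0, and let L = Dᵀ·D (the Laplacian of the path graph on k vertices). For every real β > 0, the matrix A_β = I + β·L is positive definite, hence invertible, and for all indices a, b ∈ {1, …, k}, setting d = e_a − e_b and r = |a − b|, one has dᵀ·A_β^{−1}·d ≤ C·min{1, r/β, 1/√β}. -/
open Matrix

namespace PathInverseBoundAux

open Finset

/-- AM–GM: `2|t| ≤ ε t² + 1/ε`. -/
lemma amgm0 (ε s : ℝ) (hε : 0 < ε) : 2 * s ≤ ε * s ^ 2 + 1 / ε := by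
  rw [← sub_nonneg]
  have h : ε * s ^ 2 + 1 / ε - 2 * s = (ε * s - 1) ^ 2 / ε := by field_simp; ring
  rw [h]; positivity

lemma amgm (ε t : ℝ) (hε : 0 < ε) : 2 * |t| ≤ ε * t ^ 2 + 1 / ε := by
  have := amgm0 ε |t| hε
  rwa [sq_abs] at this

/-- AM–GM: `(2/m)|t| ≤ t²/2 + 2/m²`. -/
lemma amgm0' (m s : ℝ) (hm : 0 < m) : (2 / m) * s ≤ (1 / 2) * s ^ 2 + 2 / m ^ 2 := by
  rw [← sub_nonneg]
  have h : (1 / 2) * s ^ 2 + 2 / m ^ 2 - (2 / m) * s = (m * s - 2) ^ 2 / (2 * m ^ 2) := by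
    field_simp; ring
  rw [h]; positivity

lemma amgm' (m t : ℝ) (hm : 0 < m) : (2 / m) * |t| ≤ (1 / 2) * t ^ 2 + 2 / m ^ 2 := by
  have := amgm0' m |t| hm
  rwa [sq_abs] at this

/-- Telescoping sum. -/
lemma tel (X : ℕ → ℝ) {b a : ℕ} (h : b ≤ a) :
    ∑ j ∈ Finset.Ico b a, (X (j + 1) - X j) = X a - X b := by
  rw [Finset.sum_Ico_eq_sub _ h, Finset.sum_range_sub, Finset.sum_range_sub]; ring

/-- Window averaging bound: `2|X a| ≤ S/2 + 2/m + (β/2)T + 2m/β`. -/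
lemma window_bound (k m : ℕ) (hm1 : 1 ≤ m) (hmk : m ≤ k) (β : ℝ) (hβ : 0 < β)
    (X : ℕ → ℝ) (a : ℕ) (ha : a < k) :
    2 * |X a| ≤ (∑ i ∈ range k, X i ^ 2) / 2 + 2 / m
      + (β / 2) * (∑ j ∈ range (k - 1), (X (j + 1) - X j) ^ 2) + 2 * m / β := by
  set S := ∑ i ∈ range k, X i ^ 2 with hSdef
  set T := ∑ j ∈ range (k - 1), (X (j + 1) - X j) ^ 2 with hTdef
  set c := min a (k - m) with hc
  have hck : c ≤ k - m := min_le_right _ _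
  have hcm : c + m ≤ k := by omega
  have hca : c ≤ a := min_le_left _ _
  have hac : a < c + m := by
    rcases le_total a (k - m) with h | h
    · rw [hc, min_eq_left h]; omega
    · rw [hc, min_eq_right h]; omega
  set E := ∑ j ∈ Ico c (c + m - 1), |X (j + 1) - X j| with hE
  have hE0 : 0 ≤ E := Finset.sum_nonneg fun j _ => abs_nonneg _
  have hm0 : (0 : ℝ) < (m : ℝ) := by exact_mod_cast hm1
  -- step bound: for p ≤ q both in the window, |X q - X p| ≤ E
  have hstep' : ∀ p q : ℕ, c ≤ p → q < c + m → p ≤ q → |X q - X p| ≤ E := by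
    intro p q hp hq hpq
    rw [← tel X hpq]
    calc |∑ j ∈ Ico p q, (X (j + 1) - X j)| ≤ ∑ j ∈ Ico p q, |X (j + 1) - X j| :=
          Finset.abs_sum_le_sum_abs _ _
      _ ≤ E := by
          apply Finset.sum_le_sum_of_subset_of_nonneg
          · intro j hj
            rw [Finset.mem_Ico] at hj ⊢
            omega
          · intro j _ _; exact abs_nonneg _
  have hstep : ∀ i ∈ Ico c (c + m), |X a - X i| ≤ E := by
    intro i hi
    rw [Finset.mem_Ico] at hi
    rcases le_total i a with h | h
    · exact hstep' i a hi.1 hac h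
    · rw [abs_sub_comm]; exact hstep' a i hca hi.2 h
  have hcard : (Ico c (c + m)).card = m := by rw [Nat.card_Ico]; omega
  have hsum : (m : ℝ) * X a - ∑ i ∈ Ico c (c + m), X i = ∑ i ∈ Ico c (c + m), (X a - X i) := by
    rw [Finset.sum_sub_distrib, Finset.sum_const, hcard, nsmul_eq_mul]
  have h1 : (m : ℝ) * |X a| ≤ (∑ i ∈ Ico c (c + m), |X i|) + m * E := by
    have e1 : (m : ℝ) * |X a| = |(m : ℝ) * X a| := by
      rw [abs_mul, Nat.abs_cast]
    have e2 : |(m : ℝ) * X a| ≤ |(m : ℝ) * X a - ∑ i ∈ Ico c (c + m), X i|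
        + |∑ i ∈ Ico c (c + m), X i| := by
      nth_rewrite 1 [show (m : ℝ) * X a = ((m : ℝ) * X a - ∑ i ∈ Ico c (c + m), X i)
        + ∑ i ∈ Ico c (c + m), X i by ring]
      exact abs_add_le _ _
    have e3 : |(m : ℝ) * X a - ∑ i ∈ Ico c (c + m), X i| ≤ m * E := by
      rw [hsum]
      calc |∑ i ∈ Ico c (c + m), (X a - X i)| ≤ ∑ i ∈ Ico c (c + m), |X a - X i| :=
            Finset.abs_sum_le_sum_abs _ _
        _ ≤ ∑ _i ∈ Ico c (c + m), E := Finset.sum_le_sum hstep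
        _ = m * E := by rw [Finset.sum_const, hcard, nsmul_eq_mul]
    have e4 : |∑ i ∈ Ico c (c + m), X i| ≤ ∑ i ∈ Ico c (c + m), |X i| :=
      Finset.abs_sum_le_sum_abs _ _
    linarith [e1, e2, e3, e4]
  have h2 : 2 * |X a| ≤ (2 / m) * (∑ i ∈ Ico c (c + m), |X i|) + 2 * E := by
    have := mul_le_mul_of_nonneg_left h1 (le_of_lt (by positivity : (0:ℝ) < 2 / m))
    have e5 : 2 / (m:ℝ) * ((m:ℝ) * |X a|) = 2 * |X a| := by field_simp
    have e6 : 2 / (m:ℝ) * ((∑ i ∈ Ico c (c + m), |X i|) + (m:ℝ) * E)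
        = (2 / m) * (∑ i ∈ Ico c (c + m), |X i|) + 2 * E := by field_simp
    rw [e5, e6] at this
    exact this
  have h3 : (2 / (m:ℝ)) * (∑ i ∈ Ico c (c + m), |X i|) ≤ (1 / 2) * S + 2 / m := by
    calc (2 / (m:ℝ)) * (∑ i ∈ Ico c (c + m), |X i|)
        = ∑ i ∈ Ico c (c + m), (2 / (m:ℝ)) * |X i| := by rw [Finset.mul_sum]
      _ ≤ ∑ i ∈ Ico c (c + m), ((1 / 2) * X i ^ 2 + 2 / (m:ℝ) ^ 2) :=
          Finset.sum_le_sum fun i _ => amgm' m (X i) hm0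
      _ = (1 / 2) * (∑ i ∈ Ico c (c + m), X i ^ 2) + m * (2 / (m:ℝ) ^ 2) := by
          rw [Finset.sum_add_distrib, Finset.sum_const, hcard, nsmul_eq_mul, Finset.mul_sum]
      _ ≤ (1 / 2) * S + 2 / m := by
          have hsub : ∑ i ∈ Ico c (c + m), X i ^ 2 ≤ S := by
            apply Finset.sum_le_sum_of_subset_of_nonneg
            · intro i hi
              rw [Finset.mem_Ico] at hi
              rw [Finset.mem_range]
              omega
            · intro i _ _; exact sq_nonneg _
          have e7 : (m:ℝ) * (2 / (m:ℝ) ^ 2) = 2 / m := by field_simp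
          rw [e7]
          linarith
  have h4 : 2 * E ≤ (β / 2) * T + 2 * m / β := by
    have hcard' : (Ico c (c + m - 1)).card = m - 1 := by rw [Nat.card_Ico]; omega
    calc 2 * E = ∑ j ∈ Ico c (c + m - 1), 2 * |X (j + 1) - X j| := by rw [hE, Finset.mul_sum]
      _ ≤ ∑ j ∈ Ico c (c + m - 1), ((β / 2) * (X (j + 1) - X j) ^ 2 + 1 / (β / 2)) :=
          Finset.sum_le_sum fun j _ => amgm (β / 2) _ (by positivity)
      _ = (β / 2) * (∑ j ∈ Ico c (c + m - 1), (X (j + 1) - X j) ^ 2)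
            + ((m : ℝ) - 1) * (1 / (β / 2)) := by
          rw [Finset.sum_add_distrib, Finset.sum_const, hcard', nsmul_eq_mul, Finset.mul_sum]
          have : ((m - 1 : ℕ) : ℝ) = (m : ℝ) - 1 := by
            have : (1 : ℕ) ≤ m := hm1
            push_cast [Nat.cast_sub this]
            ring
          rw [this]
      _ ≤ (β / 2) * T + 2 * m / β := by
          have hsub : ∑ j ∈ Ico c (c + m - 1), (X (j + 1) - X j) ^ 2 ≤ T := by
            apply Finset.sum_le_sum_of_subset_of_nonneg
            · intro j hj
              rw [Finset.mem_Ico] at hj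
              rw [Finset.mem_range]
              omega
            · intro j _ _; exact sq_nonneg _
          have e8 : ((m : ℝ) - 1) * (1 / (β / 2)) ≤ 2 * m / β := by
            have he : ((m : ℝ) - 1) * (1 / (β / 2)) = (2 * m - 2) / β := by
              field_simp
            rw [he]
            gcongr
            linarith
          have := mul_le_mul_of_nonneg_left hsub (by positivity : (0:ℝ) ≤ β / 2)
          linarith
  linarith [h2, h3, h4]

/-- The key scalar inequality. -/
lemma key_ineq (k : ℕ) (β : ℝ) (hβ : 0 < β) (X : ℕ → ℝ) (a b : ℕ) (hba : b ≤ a) (ha : a < k) :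
    2 * (X a - X b) - (∑ i ∈ range k, X i ^ 2)
        - β * (∑ j ∈ range (k - 1), (X (j + 1) - X j) ^ 2)
      ≤ 12 * min (min 1 (((a - b : ℕ) : ℝ) / β)) (1 / Real.sqrt β) := by
  set S := ∑ i ∈ range k, X i ^ 2 with hSdef
  set T := ∑ j ∈ range (k - 1), (X (j + 1) - X j) ^ 2 with hTdef
  have hS0 : 0 ≤ S := Finset.sum_nonneg fun i _ => sq_nonneg _
  have hT0 : 0 ≤ T := Finset.sum_nonneg fun j _ => sq_nonneg _
  have hsβ : 0 < Real.sqrt β := Real.sqrt_pos.mpr hβ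
  have hβT : 0 ≤ β * T := mul_nonneg hβ.le hT0
  rcases eq_or_lt_of_le hba with rfl | hlt
  · -- a = b
    have h0 : ((b - b : ℕ) : ℝ) = 0 := by simp
    rw [h0, zero_div]
    have : min (min 1 (0:ℝ)) (1 / Real.sqrt β) = 0 := by
      rw [min_eq_right (by norm_num : (0:ℝ) ≤ 1), min_eq_left (by positivity)]
    rw [this, mul_zero]
    linarith
  · set r : ℝ := ((a - b : ℕ) : ℝ) with hrdef
    have hr0 : 0 < r := by
      rw [hrdef]
      exact_mod_cast Nat.sub_pos_of_lt hlt
    have hrβ : 0 ≤ r / β := by positivity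
    -- Bound 1 : LHS ≤ 2
    have hpair : X a ^ 2 + X b ^ 2 ≤ S := by
      have : ∑ i ∈ ({a, b} : Finset ℕ), X i ^ 2 ≤ S := by
        apply Finset.sum_le_sum_of_subset_of_nonneg
        · intro i hi
          rw [Finset.mem_insert, Finset.mem_singleton] at hi
          rw [Finset.mem_range]
          omega
        · intro i _ _; exact sq_nonneg _
      rwa [Finset.sum_pair (by omega : a ≠ b)] at this
    have hB1 : 2 * (X a - X b) - S - β * T ≤ 2 := by
      nlinarith [sq_nonneg (X a - 1), sq_nonneg (X b + 1)]
    -- Bound 2 : LHS ≤ r/β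
    have hB2 : 2 * (X a - X b) - S - β * T ≤ r / β := by
      have htel : X a - X b = ∑ j ∈ Ico b a, (X (j + 1) - X j) := (tel X hba).symm
      have hchain : 2 * (X a - X b) ≤ β * T + r / β := by
        calc 2 * (X a - X b) = ∑ j ∈ Ico b a, 2 * (X (j + 1) - X j) := by
              rw [htel, Finset.mul_sum]
          _ ≤ ∑ j ∈ Ico b a, (β * (X (j + 1) - X j) ^ 2 + 1 / β) :=
              Finset.sum_le_sum fun j _ =>
                le_trans (by have := le_abs_self (X (j + 1) - X j); linarith)
                  (amgm β _ hβ)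
          _ = β * (∑ j ∈ Ico b a, (X (j + 1) - X j) ^ 2) + ((a - b : ℕ) : ℝ) * (1 / β) := by
              rw [Finset.sum_add_distrib, Finset.sum_const, Nat.card_Ico, nsmul_eq_mul,
                Finset.mul_sum]
          _ ≤ β * T + r / β := by
              have hsub : ∑ j ∈ Ico b a, (X (j + 1) - X j) ^ 2 ≤ T := by
                apply Finset.sum_le_sum_of_subset_of_nonneg
                · intro j hj
                  rw [Finset.mem_Ico] at hj
                  rw [Finset.mem_range]
                  omega
                · intro j _ _; exact sq_nonneg _
              have := mul_le_mul_of_nonneg_left hsub hβ.le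
              have e : ((a - b : ℕ) : ℝ) * (1 / β) = r / β := by rw [hrdef]; ring
              rw [e]
              linarith
      linarith
    -- Bound 3 : LHS ≤ 12 / √β
    have hB3 : 2 * (X a - X b) - S - β * T ≤ 12 * (1 / Real.sqrt β) := by
      have hsq : Real.sqrt β * Real.sqrt β = β := Real.mul_self_sqrt hβ.le
      rcases le_or_gt (Real.sqrt β) 1 with h1 | h1
      · have h1' : 1 ≤ 1 / Real.sqrt β := by
          rw [le_div_iff₀ hsβ]; linarith
        linarith
      · rcases le_or_gt (k : ℝ) (Real.sqrt β) with h2 | h2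
        · -- r/β ≤ 1/√β
          have hrk : r ≤ (k : ℝ) := by
            rw [hrdef]
            exact_mod_cast Nat.le_of_lt (by omega : a - b < k)
          have hkey : r / β ≤ 1 / Real.sqrt β := by
            rw [div_le_div_iff₀ hβ hsβ]
            nlinarith
          have hpos : 0 ≤ 1 / Real.sqrt β := by positivity
          linarith
        · -- window case
          set m := ⌈Real.sqrt β⌉₊ with hmdef
          have hm1 : 1 ≤ m := Nat.one_le_iff_ne_zero.mpr (by
            simp only [hmdef, ne_eq, Nat.ceil_eq_zero, not_le]
            exact hsβ)
          have hmk : m ≤ k := Nat.ceil_le.mpr h2.le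
          have hm_lb : Real.sqrt β ≤ (m : ℝ) := Nat.le_ceil _
          have hm_ub : (m : ℝ) ≤ 2 * Real.sqrt β := by
            have := Nat.ceil_lt_add_one (le_of_lt hsβ)
            have : (m : ℝ) < Real.sqrt β + 1 := this
            linarith
          have hm0 : (0 : ℝ) < (m : ℝ) := lt_of_lt_of_le hsβ hm_lb
          have hwa := window_bound k m hm1 hmk β hβ X a ha
          have hwb := window_bound k m hm1 hmk β hβ X b (by omega)
          rw [← hSdef, ← hTdef] at hwa hwb
          have haa : X a - X b ≤ |X a| + |X b| := by
            have := le_abs_self (X a)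
            have := neg_abs_le (X b)
            linarith
          have hmain : 2 * (X a - X b) - S - β * T ≤ 4 / m + 4 * m / β := by
            have h2ab : 2 * (X a - X b) ≤ 2 * |X a| + 2 * |X b| := by linarith
            ring_nf at hwa hwb h2ab ⊢
            linarith
          have h4m : 4 / (m : ℝ) ≤ 4 / Real.sqrt β := by
            apply div_le_div_of_nonneg_left (by norm_num) hsβ hm_lb
          have h4mb : 4 * (m : ℝ) / β ≤ 8 / Real.sqrt β := by
            rw [div_le_div_iff₀ hβ hsβ]
            nlinarith
          ring_nf at hmain h4m h4mb ⊢
          linarith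
    -- combine
    have hmin : 12 * min (min 1 (r / β)) (1 / Real.sqrt β)
        = min (min 12 (12 * (r / β))) (12 * (1 / Real.sqrt β)) := by
      rw [mul_min_of_nonneg _ _ (by norm_num : (0:ℝ) ≤ 12),
        mul_min_of_nonneg _ _ (by norm_num : (0:ℝ) ≤ 12), mul_one]
    rw [hmin]
    refine le_min (le_min (by linarith) ?_) hB3
    linarith

end PathInverseBoundAux

/-- **Path inverse bound.**
Let `L = Dᵀ D` be the Laplacian of the path on `k` vertices (`D` the first-difference
matrix). There is a universal constant `C > 0` such that for every `β > 0`, the matrix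
`A_β = I + β L` is positive definite (hence invertible) and for `d = e_a − e_b`,
`r = |a − b|`, one has `dᵀ A_β⁻¹ d ≤ C · min{1, r/β, 1/√β}`. -/
theorem path_inverse_bound :
    ∃ C : ℝ, 0 < C ∧
      ∀ (k : ℕ), 2 ≤ k →
      ∀ (D : Matrix (Fin (k - 1)) (Fin k) ℝ),
        (∀ (j : Fin (k - 1)) (i : Fin k),
          D j i = if (i : ℕ) = (j : ℕ) then -1
            else if (i : ℕ) = (j : ℕ) + 1 then 1 else 0) →
      ∀ β : ℝ, 0 < β →
        (1 + β • (Dᵀ * D)).PosDef ∧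
        IsUnit (1 + β • (Dᵀ * D)) ∧
        ∀ a b : Fin k,
          (Pi.single a 1 - Pi.single b 1) ⬝ᵥ
              ((1 + β • (Dᵀ * D))⁻¹ *ᵥ (Pi.single a 1 - Pi.single b 1))
            ≤ C * min (min 1 (|(a : ℝ) - (b : ℝ)| / β)) (1 / Real.sqrt β) := by
  classical
  refine ⟨12, by norm_num, ?_⟩
  intro k hk D hD β hβ
  set A : Matrix (Fin k) (Fin k) ℝ := 1 + β • (Dᵀ * D) with hA
  have quad : ∀ x : Fin k → ℝ, x ⬝ᵥ (A *ᵥ x) = x ⬝ᵥ x + β * ((D *ᵥ x) ⬝ᵥ (D *ᵥ x)) := by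
    intro x
    rw [hA, Matrix.add_mulVec, Matrix.one_mulVec, dotProduct_add, Matrix.smul_mulVec,
      dotProduct_smul, ← Matrix.mulVec_mulVec, Matrix.dotProduct_mulVec,
      Matrix.vecMul_transpose, smul_eq_mul]
  have hherm : A.IsHermitian := by
    rw [hA]
    simp [Matrix.IsHermitian, Matrix.conjTranspose_eq_transpose_of_trivial, Matrix.transpose_add,
      Matrix.transpose_smul, Matrix.transpose_mul, Matrix.transpose_one, Matrix.mul_assoc]
  have hpd : A.PosDef := by
    refine Matrix.PosDef.of_dotProduct_mulVec_pos hherm fun x hx => ?_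
    have hstar : star x = x := by
      funext i; simp
    rw [hstar, quad x]
    have h1 : 0 < x ⬝ᵥ x := by
      have := (Matrix.dotProduct_star_self_pos_iff (v := x)).mpr hx
      simpa using this
    have h2 : 0 ≤ (D *ᵥ x) ⬝ᵥ (D *ᵥ x) := by
      apply Finset.sum_nonneg
      intro i _
      exact mul_self_nonneg _
    have := mul_nonneg hβ.le h2
    linarith
  have hunit : IsUnit A := hpd.isUnit
  refine ⟨hpd, hunit, ?_⟩
  intro a b
  have hdet : IsUnit A.det := (Matrix.isUnit_iff_isUnit_det A).mp hunit
  set d : Fin k → ℝ := Pi.single a 1 - Pi.single b 1 with hd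
  set y : Fin k → ℝ := A⁻¹ *ᵥ d with hy
  have hAy : A *ᵥ y = d := by
    rw [hy, Matrix.mulVec_mulVec, Matrix.mul_nonsing_inv A hdet, Matrix.one_mulVec]
  have hQ : d ⬝ᵥ y = y ⬝ᵥ y + β * ((D *ᵥ y) ⬝ᵥ (D *ᵥ y)) := by
    have e : d ⬝ᵥ y = y ⬝ᵥ (A *ᵥ y) := by
      rw [hAy, dotProduct_comm]
    rw [e, quad y]
  have hya : d ⬝ᵥ y = y a - y b := by
    rw [hd, sub_dotProduct, single_dotProduct, single_dotProduct,
      one_mul, one_mul]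
  -- reindex on ℕ
  set X : ℕ → ℝ := fun n => if h : n < k then y ⟨n, h⟩ else 0 with hX
  have hXa : ∀ (i : Fin k), X (i : ℕ) = y i := by
    intro i
    simp only [hX, i.isLt, dif_pos]
  have hS : y ⬝ᵥ y = ∑ i ∈ Finset.range k, X i ^ 2 := by
    rw [← Fin.sum_univ_eq_sum_range (fun n => X n ^ 2) k]
    simp only [dotProduct]
    apply Finset.sum_congr rfl
    intro i _
    rw [hXa i]
    ring
  have hDy : ∀ j : Fin (k - 1), (D *ᵥ y) j = X ((j : ℕ) + 1) - X (j : ℕ) := by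
    intro j
    have hj1 : (j : ℕ) + 1 < k := by omega
    have hj0 : (j : ℕ) < k := by omega
    have hX1 : X ((j : ℕ) + 1) = y ⟨(j : ℕ) + 1, hj1⟩ := dif_pos hj1
    have hX0 : X (j : ℕ) = y ⟨(j : ℕ), hj0⟩ := dif_pos hj0
    rw [hX1, hX0]
    show ∑ i, D j i * y i = _
    have : ∀ i : Fin k, D j i * y i =
        (if i = (⟨(j : ℕ) + 1, hj1⟩ : Fin k) then y i else 0)
          + (if i = (⟨(j : ℕ), hj0⟩ : Fin k) then -y i else 0) := by
      intro i
      rw [hD j i]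
      by_cases h1 : (i : ℕ) = (j : ℕ)
      · rw [if_pos h1, if_neg (by rw [Fin.ext_iff]; simp; omega),
          if_pos (by rw [Fin.ext_iff]; exact h1)]
        ring
      · rw [if_neg h1]
        by_cases h2 : (i : ℕ) = (j : ℕ) + 1
        · rw [if_pos h2, if_pos (by rw [Fin.ext_iff]; exact h2),
            if_neg (by rw [Fin.ext_iff]; simpa using h1)]
          ring
        · rw [if_neg h2, if_neg (by rw [Fin.ext_iff]; simpa using h2),
            if_neg (by rw [Fin.ext_iff]; simpa using h1)]
          ring
    rw [Finset.sum_congr rfl (fun i _ => this i), Finset.sum_add_distrib,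
      Finset.sum_ite_eq' Finset.univ, Finset.sum_ite_eq' Finset.univ]
    simp only [Finset.mem_univ, if_true]
    ring
  have hT : (D *ᵥ y) ⬝ᵥ (D *ᵥ y) = ∑ j ∈ Finset.range (k - 1), (X (j + 1) - X j) ^ 2 := by
    rw [← Fin.sum_univ_eq_sum_range (fun n => (X (n + 1) - X n) ^ 2) (k - 1)]
    simp only [dotProduct]
    apply Finset.sum_congr rfl
    intro j _
    rw [hDy j]
    ring
  have hQ' : d ⬝ᵥ y = (∑ i ∈ Finset.range k, X i ^ 2)
      + β * (∑ j ∈ Finset.range (k - 1), (X (j + 1) - X j) ^ 2) := by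
    rw [hQ, hS, hT]
  show d ⬝ᵥ y ≤ _
  rcases le_total (b : ℕ) (a : ℕ) with hba | hab
  · have hkey := PathInverseBoundAux.key_ineq k β hβ X (a : ℕ) (b : ℕ) hba a.isLt
    have habs : |(a : ℝ) - (b : ℝ)| = (((a : ℕ) - (b : ℕ) : ℕ) : ℝ) := by
      rw [Nat.cast_sub hba, abs_of_nonneg]
      have : ((b : ℕ) : ℝ) ≤ ((a : ℕ) : ℝ) := by exact_mod_cast hba
      linarith
    rw [habs]
    have hval : 2 * (X (a : ℕ) - X (b : ℕ))
        - (∑ i ∈ Finset.range k, X i ^ 2)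
        - β * (∑ j ∈ Finset.range (k - 1), (X (j + 1) - X j) ^ 2) = d ⬝ᵥ y := by
      rw [hXa a, hXa b, ← hya]
      linarith [hQ']
    rw [hval] at hkey
    exact hkey
  · have hkey := PathInverseBoundAux.key_ineq k β hβ (fun n => -X n) (b : ℕ) (a : ℕ)
      hab b.isLt
    have habs : |(a : ℝ) - (b : ℝ)| = (((b : ℕ) - (a : ℕ) : ℕ) : ℝ) := by
      rw [abs_sub_comm, Nat.cast_sub hab, abs_of_nonneg]
      have : ((a : ℕ) : ℝ) ≤ ((b : ℕ) : ℝ) := by exact_mod_cast hab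
      linarith
    rw [habs]
    have hSneg : ∑ i ∈ Finset.range k, (-X i) ^ 2 = ∑ i ∈ Finset.range k, X i ^ 2 :=
      Finset.sum_congr rfl fun i _ => by ring
    have hTneg : ∑ j ∈ Finset.range (k - 1), (-X (j + 1) - -X j) ^ 2
        = ∑ j ∈ Finset.range (k - 1), (X (j + 1) - X j) ^ 2 :=
      Finset.sum_congr rfl fun j _ => by ring
    simp only [hSneg, hTneg] at hkey
    have hval : 2 * (-X (b : ℕ) - -X (a : ℕ))
        - (∑ i ∈ Finset.range k, X i ^ 2)
        - β * (∑ j ∈ Finset.range (k - 1), (X (j + 1) - X j) ^ 2) = d ⬝ᵥ y := by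
      rw [hXa a, hXa b]
      linarith [hQ', hya]
    rw [hval] at hkey
    exact hkey
end

section
/- Let S be a real random variable on a probability space with CDF F_S, and let q_1 ≤ q_2 ≤ … ≤ q_k be real numbers with F_S(q_j) > 0 for every j. Define M_j = 1{S ≤ q_j}/F_S(q_j) and R_j = M_{j+1} − M_j for 1 ≤ j ≤ k−1. Then E[R_j²] = 1/F_S(q_j) − 1/F_S(q_{j+1}) for every j, and E[R_i·R_j] = 0 whenever i ≠ j. -/
open MeasureTheory

section Aux

variable {Ω : Type*} [MeasurableSpace Ω] (μ : Measure Ω) [IsProbabilityMeasure μ]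
  (S : Ω → ℝ)

lemma shill_aux_eq_indicator (a b pa pb : ℝ) :
    (fun ω => ((if S ω ≤ a then (1:ℝ) else 0)/pa) * ((if S ω ≤ b then (1:ℝ) else 0)/pb))
    = Set.indicator ({ω | S ω ≤ a} ∩ {ω | S ω ≤ b}) (fun _ => (pa*pb)⁻¹) := by
  funext ω
  simp only [Set.indicator, Set.mem_inter_iff, Set.mem_setOf_eq]
  by_cases h1 : S ω ≤ a <;> by_cases h2 : S ω ≤ b <;>
    simp [h1, h2, div_mul_div_comm, mul_inv, mul_comm]

lemma shill_aux_integrable (hS : Measurable S) (a b pa pb : ℝ) :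
    Integrable (fun ω => ((if S ω ≤ a then (1:ℝ) else 0)/pa) *
      ((if S ω ≤ b then (1:ℝ) else 0)/pb)) μ := by
  rw [shill_aux_eq_indicator]
  exact (integrable_const _).indicator ((hS measurableSet_Iic).inter (hS measurableSet_Iic))

lemma shill_aux_int (hS : Measurable S) (a b : ℝ) (hab : a ≤ b) (pa pb : ℝ)
    (hpa : pa = (μ {ω | S ω ≤ a}).toReal) (hpa0 : pa ≠ 0) :
    ∫ ω, ((if S ω ≤ a then (1:ℝ) else 0)/pa) * ((if S ω ≤ b then (1:ℝ) else 0)/pb) ∂μ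
    = 1 / pb := by
  have hsub : {ω | S ω ≤ a} ∩ {ω | S ω ≤ b} = {ω | S ω ≤ a} := by
    ext ω
    simp only [Set.mem_inter_iff, Set.mem_setOf_eq]
    exact ⟨fun h => h.1, fun h => ⟨h, h.trans hab⟩⟩
  have hma : MeasurableSet {ω | S ω ≤ a} := hS measurableSet_Iic
  rw [shill_aux_eq_indicator, hsub, integral_indicator_const _ hma]
  rw [smul_eq_mul, measureReal_def, ← hpa, mul_inv]
  rw [← mul_assoc, mul_inv_cancel₀ hpa0, one_mul, one_div]

end Aux

/-- **Orthogonality and second moments of normalized shill indicators.**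
For a real random variable `S` with CDF `F_S` and `q_1 ≤ … ≤ q_k` with
`F_S(q_j) > 0`, setting `M_j = 1{S ≤ q_j}/F_S(q_j)` and `R_j = M_{j+1} − M_j`,
one has `E[R_j²] = 1/F_S(q_j) − 1/F_S(q_{j+1})` and `E[R_i R_j] = 0` for `i ≠ j`. -/
theorem shill_indicator_increments
    {Ω : Type*} [MeasurableSpace Ω] (μ : Measure Ω) [IsProbabilityMeasure μ]
    (S : Ω → ℝ) (hS : Measurable S)
    (FS : ℝ → ℝ) (hFS : ∀ t, FS t = (μ {ω | S ω ≤ t}).toReal)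
    (k : ℕ) (q : ℕ → ℝ)
    (hq : ∀ j : ℕ, j + 1 < k → q j ≤ q (j + 1))
    (hpos : ∀ j : ℕ, j < k → 0 < FS (q j))
    (M : ℕ → Ω → ℝ)
    (hM : ∀ (j : ℕ) (ω : Ω), M j ω = (if S ω ≤ q j then (1:ℝ) else 0) / FS (q j))
    (R : ℕ → Ω → ℝ)
    (hR : ∀ (j : ℕ) (ω : Ω), R j ω = M (j + 1) ω - M j ω) :
    (∀ j : ℕ, j + 1 < k →
      ∫ ω, (R j ω) ^ 2 ∂μ = 1 / FS (q j) - 1 / FS (q (j + 1))) ∧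
    (∀ i j : ℕ, i + 1 < k → j + 1 < k → i ≠ j →
      ∫ ω, R i ω * R j ω ∂μ = 0) := by
  set f : ℕ → Ω → ℝ := fun m ω => (if S ω ≤ q m then (1:ℝ) else 0) / FS (q m) with hf
  have hfR : ∀ m ω, R m ω = f (m + 1) ω - f m ω := by
    intro m ω; rw [hR, hM, hM]
  have mono : ∀ a b : ℕ, a ≤ b → b < k → q a ≤ q b := by
    intro a b hab hbk
    induction b with
    | zero => interval_cases a; rfl
    | succ n ih =>
      rcases Nat.eq_or_lt_of_le hab with h | h
      · rw [h]
      · exact (ih (Nat.lt_succ_iff.mp h) (lt_trans (Nat.lt_succ_self n) hbk)).trans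
          (hq n hbk)
  have hInt : ∀ a b : ℕ, Integrable (fun ω => f a ω * f b ω) μ := fun a b =>
    shill_aux_integrable μ S hS _ _ _ _
  have hval : ∀ a b : ℕ, a < k → q a ≤ q b →
      ∫ ω, f a ω * f b ω ∂μ = 1 / FS (q b) := fun a b hak hqab =>
    shill_aux_int μ S hS _ _ hqab _ _ (hFS _) (ne_of_gt (hpos a hak))
  have hcomm : ∀ a b : ℕ, ∫ ω, f a ω * f b ω ∂μ = ∫ ω, f b ω * f a ω ∂μ := by
    intro a b; simp_rw [mul_comm]
  have expand : ∀ i j : ℕ,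
      ∫ ω, R i ω * R j ω ∂μ =
        (∫ ω, f (i+1) ω * f (j+1) ω ∂μ - ∫ ω, f (i+1) ω * f j ω ∂μ) -
        (∫ ω, f i ω * f (j+1) ω ∂μ - ∫ ω, f i ω * f j ω ∂μ) := by
    intro i j
    have heq : (fun ω => R i ω * R j ω) =
        fun ω => (f (i+1) ω * f (j+1) ω - f (i+1) ω * f j ω) -
          (f i ω * f (j+1) ω - f i ω * f j ω) := by
      funext ω; rw [hfR, hfR]; ring
    have h1 : Integrable (fun ω => f (i+1) ω * f (j+1) ω - f (i+1) ω * f j ω) μ :=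
      (hInt _ _).sub (hInt _ _)
    have h2 : Integrable (fun ω => f i ω * f (j+1) ω - f i ω * f j ω) μ :=
      (hInt _ _).sub (hInt _ _)
    rw [heq, integral_sub h1 h2, integral_sub (hInt _ _) (hInt _ _),
      integral_sub (hInt _ _) (hInt _ _)]
  have off : ∀ i j : ℕ, i < j → i + 1 < k → j + 1 < k →
      ∫ ω, R i ω * R j ω ∂μ = 0 := by
    intro i j hij hik hjk
    have hjk' : j < k := lt_trans (Nat.lt_succ_self j) hjk
    have hik' : i < k := lt_trans (Nat.lt_succ_self i) hik
    rw [expand,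
      hval (i+1) (j+1) hik (mono (i+1) (j+1) (by omega) hjk),
      hval (i+1) j hik (mono (i+1) j (by omega) hjk'),
      hval i (j+1) hik' (mono i (j+1) (by omega) hjk),
      hval i j hik' (mono i j (by omega) hjk')]
    ring
  constructor
  · intro j hjk
    have hjk' : j < k := lt_trans (Nat.lt_succ_self j) hjk
    have hsq : (fun ω => (R j ω) ^ 2) = fun ω => R j ω * R j ω := by
      funext ω; ring
    rw [hsq, expand,
      hval (j+1) (j+1) hjk le_rfl,
      hcomm (j+1) j, hval j (j+1) hjk' (hq j hjk),
      hval j j hjk' le_rfl]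
    ring
  · intro i j hik hjk hij
    rcases lt_or_gt_of_ne hij with h | h
    · exact off i j h hik hjk
    · have : ∫ ω, R i ω * R j ω ∂μ = ∫ ω, R j ω * R i ω ∂μ := by simp_rw [mul_comm]
      rw [this]
      exact off j i h hjk hik
end

section
/- For every C_S ≥ 0 there exists a constant C > 0, depending only on C_S, with the following property. Let B and S be independent real random variables with CDFs F_B and F_S. Let k ≥ 2 be an integer, h > 0, and let q_1 < … < q_k be an equally spaced grid contained in [0,1] with q_{j+1} − q_j = h for all j. Let v ∈ [0,1] with q_k ≤ v and set a_j = v − q_j. Let γ ∈ (0,1] and w ≥ 0 satisfy: F_S(q_j) ≥ γ for all j; F_S(q_{j+1}) − F_S(q_j) ≤ C_S·γ·h for all j ≤ k−1; and a_{j+1}·(F_B(q_{j+1}) − F_B(q_j)) ≤ w + h for all j ≤ k−1. Define, for each j, Y_j = 1{B ≤ q_1} + 1{B > q_1}·1{max(B,S) ≤ q_j}/F_S(q_j), and Y_j^suf = a_{j+1}·Y_{j+1} − a_j·Y_j for j ≤ k−1. Then for every x ∈ ℝ^{k−1}, Var(Σ_{j=1}^{k−1} x_j·Y_j^suf) ≤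 C·((w+h)/γ)·Σ_{j=1}^{k−1} x_j². -/
open MeasureTheory ProbabilityTheory
open scoped ENNReal
set_option maxHeartbeats 4000000

/-- weighted Cauchy-Schwarz -/
lemma scb_weighted_cs (s : Finset ℕ) (d x : ℕ → ℝ) (hd : ∀ j ∈ s, 0 ≤ d j) :
    (∑ j ∈ s, x j * d j) ^ 2 ≤ (∑ j ∈ s, d j) * (∑ j ∈ s, d j * x j ^ 2) := by
  have h1 : (∑ j ∈ s, x j * d j) = ∑ j ∈ s, Real.sqrt (d j) * (Real.sqrt (d j) * x j) := by
    refine Finset.sum_congr rfl fun j hj => ?_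
    rw [← mul_assoc, Real.mul_self_sqrt (hd j hj)]; ring
  have h2 := Finset.sum_mul_sq_le_sq_mul_sq s (fun j => Real.sqrt (d j))
    (fun j => Real.sqrt (d j) * x j)
  rw [h1]
  refine h2.trans (le_of_eq ?_)
  congr 1
  · exact Finset.sum_congr rfl fun j hj => Real.sq_sqrt (hd j hj)
  · refine Finset.sum_congr rfl fun j hj => ?_
    rw [mul_pow, Real.sq_sqrt (hd j hj)]

lemma scb_var_le {Ω : Type} [MeasurableSpace Ω] (μ : Measure Ω) [IsProbabilityMeasure μ]
    (Z : Ω → ℝ) (hZm : Measurable Z) (K : ℝ) (hb : ∀ ω, |Z ω| ≤ K) (c : ℝ) :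
    variance Z μ ≤ ∫ ω, (Z ω - c) ^ 2 ∂μ := by
  have hmem : MemLp Z 2 μ :=
    MemLp.of_bound hZm.aestronglyMeasurable K (ae_of_all μ (by simpa [Real.norm_eq_abs] using hb))
  have hZ1 : Integrable Z μ := hmem.integrable one_le_two
  have hZ2 : Integrable (fun ω => Z ω ^ 2) μ := hmem.integrable_sq
  have hvar := variance_eq_sub hmem
  have hexp : ∫ ω, (Z ω - c) ^ 2 ∂μ = (∫ ω, Z ω ^ 2 ∂μ) - 2 * c * (∫ ω, Z ω ∂μ) + c ^ 2 := by
    have e : (fun ω => (Z ω - c) ^ 2) = fun ω => (Z ω ^ 2 - (2 * c) * Z ω) + c ^ 2 := by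
      funext ω; ring
    have ia : Integrable (fun ω => Z ω ^ 2 - 2 * c * Z ω) μ := hZ2.sub (hZ1.const_mul (2 * c))
    have ib : Integrable (fun ω => 2 * c * Z ω) μ := hZ1.const_mul (2 * c)
    rw [e, integral_add ia (integrable_const _), integral_sub hZ2 ib, integral_const_mul,
      integral_const]
    simp [measure_univ]
  have h2 : variance Z μ = (∫ ω, Z ω ^ 2 ∂μ) - (∫ ω, Z ω ∂μ) ^ 2 := by
    simpa [pow_two] using hvar
  rw [h2, hexp]
  nlinarith [sq_nonneg ((∫ ω, Z ω ∂μ) - c)]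

lemma scb_swap_sum (n : ℕ) (P y : ℕ → ℝ) :
    ∑ m ∈ Finset.range n, P m * ∑ j ∈ Finset.Ico (m + 1) n, y j
      = ∑ j ∈ Finset.range n, (∑ m ∈ Finset.range j, P m) * y j := by
  have e1 : ∀ m, ∑ j ∈ Finset.Ico (m + 1) n, y j
      = ∑ j ∈ Finset.range n, if m < j then y j else 0 := by
    intro m
    rw [← Finset.sum_filter]
    congr 1
    ext j
    simp [Finset.mem_Ico, Finset.mem_filter, Finset.mem_range]
    omega
  calc ∑ m ∈ Finset.range n, P m * ∑ j ∈ Finset.Ico (m + 1) n, y j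
      = ∑ m ∈ Finset.range n, ∑ j ∈ Finset.range n, (if m < j then P m * y j else 0) := by
        refine Finset.sum_congr rfl fun m _ => ?_
        rw [e1, Finset.mul_sum]
        exact Finset.sum_congr rfl fun j _ => by split <;> simp
    _ = ∑ j ∈ Finset.range n, ∑ m ∈ Finset.range n, (if m < j then P m * y j else 0) :=
        Finset.sum_comm
    _ = ∑ j ∈ Finset.range n, (∑ m ∈ Finset.range j, P m) * y j := by
        refine Finset.sum_congr rfl fun j hj => ?_
        rw [Finset.sum_ite, Finset.sum_const_zero, add_zero, ← Finset.sum_mul]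
        congr 2
        ext m
        simp only [Finset.mem_filter, Finset.mem_range] at hj ⊢
        omega

/-- **Suffix covariance bound.**
For every `C_S ≥ 0` there is `C > 0` (depending only on `C_S`) such that, under
`(γ, C_S)`-regularity of the shill CDF on an equally spaced grid and utility width `w`,
the suffix-difference observations satisfy
`Var(Σ_j x_j Y_j^suf) ≤ C·((w+h)/γ)·Σ_j x_j²`. -/
theorem suffix_covariance_bound (CS : ℝ) (hCS : 0 ≤ CS) :
    ∃ C : ℝ, 0 < C ∧
      ∀ (Ω : Type) (_ : MeasurableSpace Ω) (μ : Measure Ω), IsProbabilityMeasure μ →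
      ∀ (B S : Ω → ℝ), Measurable B → Measurable S → IndepFun B S μ →
      ∀ (FB FS : ℝ → ℝ),
        (∀ t, FB t = (μ {ω | B ω ≤ t}).toReal) →
        (∀ t, FS t = (μ {ω | S ω ≤ t}).toReal) →
      ∀ (k : ℕ), 2 ≤ k →
      ∀ (h : ℝ), 0 < h →
      ∀ (q : ℕ → ℝ),
        (∀ j : ℕ, j < k → q j ∈ Set.Icc (0:ℝ) 1) →
        (∀ j : ℕ, j + 1 < k → q (j + 1) - q j = h) →
      ∀ (v : ℝ), v ∈ Set.Icc (0:ℝ) 1 → q (k - 1) ≤ v →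
      ∀ (γ : ℝ), γ ∈ Set.Ioc (0:ℝ) 1 →
      ∀ (w : ℝ), 0 ≤ w →
        (∀ j : ℕ, j < k → γ ≤ FS (q j)) →
        (∀ j : ℕ, j + 1 < k → FS (q (j + 1)) - FS (q j) ≤ CS * γ * h) →
        (∀ j : ℕ, j + 1 < k →
          (v - q (j + 1)) * (FB (q (j + 1)) - FB (q j)) ≤ w + h) →
      ∀ (Y : ℕ → Ω → ℝ),
        (∀ (j : ℕ) (ω : Ω), Y j ω =
          (if B ω ≤ q 0 then (1:ℝ) else 0) +
            (if q 0 < B ω then (1:ℝ) else 0) *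
              (if max (B ω) (S ω) ≤ q j then (1:ℝ) else 0) / FS (q j)) →
      ∀ (Ysuf : ℕ → Ω → ℝ),
        (∀ (j : ℕ) (ω : Ω), Ysuf j ω =
          (v - q (j + 1)) * Y (j + 1) ω - (v - q j) * Y j ω) →
      ∀ x : ℕ → ℝ,
        variance (fun ω => ∑ j ∈ Finset.range (k - 1), x j * Ysuf j ω) μ
          ≤ C * ((w + h) / γ) * ∑ j ∈ Finset.range (k - 1), (x j) ^ 2 := by
  refine ⟨100 * (1 + CS) ^ 2, by positivity, ?_⟩
  intro Ω mΩ μ hprob B S hB hS hBS FB FS hFB hFS k hk h hh q hq01 hstep v hv hqkv γ hγ w hw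
    hFSγ hFSstep haG Y hY Ysuf hYsuf x
  set n := k - 1 with hn
  have hn1 : 1 ≤ n := by omega
  have hkn : k = n + 1 := by omega
  obtain ⟨hγ0, hγ1⟩ := hγ
  obtain ⟨hv0, hv1⟩ := hv
  -- abbreviations
  set F : ℕ → ℝ := fun j => FS (q j) with hFdef
  set G : ℕ → ℝ := fun j => FB (q j) with hGdef
  set a : ℕ → ℝ := fun j => v - q j with hadef
  -- grid facts
  have hqlin : ∀ j, j ≤ n → q j = q 0 + j * h := by
    intro j hj
    induction j with
    | zero => simp
    | succ i ih =>
      have hi : q (i + 1) - q i = h := hstep i (by omega)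
      have := ih (by omega)
      push_cast
      linarith
  have hqmono : ∀ i j, i ≤ j → j ≤ n → q i ≤ q j := by
    intro i j hij hj
    rw [hqlin i (by omega), hqlin j hj]
    have : (i : ℝ) ≤ j := by exact_mod_cast hij
    nlinarith [hh.le]
  have hq0 : (0:ℝ) ≤ q 0 := (hq01 0 (by omega)).1
  have hqn1 : q n ≤ 1 := (hq01 n (by omega)).2
  have hnh : (n : ℝ) * h ≤ 1 := by
    have := hqlin n le_rfl
    nlinarith
  have hh1 : h ≤ 1 := by
    have : (1:ℝ) ≤ (n:ℝ) := by exact_mod_cast hn1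
    nlinarith [hh.le]
  have ha0 : ∀ j, j ≤ n → 0 ≤ a j := by
    intro j hj
    have : q j ≤ q n := hqmono j n hj le_rfl
    have : q n ≤ v := by rwa [hn] at hqkv ⊢
    simp only [hadef]
    have := hqmono j n hj le_rfl
    rw [hn] at hqkv
    linarith
  have ha1 : ∀ j, j ≤ n → a j ≤ 1 := by
    intro j hj
    have : (0:ℝ) ≤ q j := (hq01 j (by omega)).1
    simp only [hadef]; linarith
  have hastep : ∀ j, j < n → a j = a (j + 1) + h := by
    intro j hj
    have := hstep j (by omega)
    simp only [hadef]; linarith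
  -- toReal of prob measures
  have hmuR : ∀ s : Set Ω, (μ s).toReal ≤ 1 := by
    intro s
    have h1 : μ s ≤ 1 := prob_le_one
    calc (μ s).toReal ≤ (1 : ℝ≥0∞).toReal :=
          ENNReal.toReal_mono (by simp) h1
      _ = 1 := by simp
  have hF1 : ∀ j, j ≤ n → F j ≤ 1 := fun j _ => by
    simpa only [hFdef, hFS (q j)] using hmuR {ω | S ω ≤ q j}
  have hFγ : ∀ j, j ≤ n → γ ≤ F j := fun j hj => hFSγ j (by omega)
  have hF0 : ∀ j, j ≤ n → 0 < F j := fun j hj => lt_of_lt_of_le hγ0 (hFγ j hj)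
  have hFmono : ∀ i j, i ≤ j → j ≤ n → F i ≤ F j := by
    intro i j hij hj
    simp only [hFdef, hFS]
    refine ENNReal.toReal_mono (measure_ne_top μ _) (measure_mono ?_)
    intro ω hω
    exact le_trans hω (hqmono i j hij hj)
  have hGmono : ∀ i j, i ≤ j → j ≤ n → G i ≤ G j := by
    intro i j hij hj
    simp only [hGdef, hFB]
    refine ENNReal.toReal_mono (measure_ne_top μ _) (measure_mono ?_)
    intro ω hω
    exact le_trans hω (hqmono i j hij hj)
  have hG0 : ∀ j, 0 ≤ G j := fun j => by simp only [hGdef, hFB]; positivity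
  have hG1 : ∀ j, G j ≤ 1 := fun j => by
    simpa only [hGdef, hFB (q j)] using hmuR {ω | B ω ≤ q j}
  have hΔF : ∀ j, j < n → F (j + 1) - F j ≤ CS * γ * h := fun j hj => hFSstep j (by omega)
  have hΔG : ∀ j, j < n → a (j + 1) * (G (j + 1) - G j) ≤ w + h := fun j hj => haG j (by omega)
  -- measure-theoretic sets
  set Dset : ℕ → Set Ω := fun j => B ⁻¹' (Set.Ioc (q 0) (q j)) ∩ S ⁻¹' (Set.Iic (q j))
    with hDdef
  have hDmeas : ∀ j, MeasurableSet (Dset j) := fun j =>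
    (hB measurableSet_Ioc).inter (hS measurableSet_Iic)
  set p : ℕ → ℝ := fun j => (μ (Dset j)).toReal with hpdef
  have hmuB : ∀ t : ℝ, μ (B ⁻¹' Set.Iic t) = ENNReal.ofReal (FB t) := by
    intro t
    rw [hFB t, ENNReal.ofReal_toReal (measure_ne_top μ _)]
    rfl
  have hpformula : ∀ j, j ≤ n → p j = (G j - G 0) * F j := by
    intro j hj
    have hmul : μ (Dset j) = μ (B ⁻¹' Set.Ioc (q 0) (q j)) * μ (S ⁻¹' Set.Iic (q j)) :=
      hBS.measure_inter_preimage_eq_mul _ _ measurableSet_Ioc measurableSet_Iic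
    have hsub : B ⁻¹' Set.Ioc (q 0) (q j) = B ⁻¹' Set.Iic (q j) \ B ⁻¹' Set.Iic (q 0) := by
      rw [← Set.preimage_diff, Set.Iic_sdiff_Iic]
    have hdiff : μ (B ⁻¹' Set.Ioc (q 0) (q j))
        = μ (B ⁻¹' Set.Iic (q j)) - μ (B ⁻¹' Set.Iic (q 0)) := by
      rw [hsub]
      refine measure_diff ?_ (hB measurableSet_Iic).nullMeasurableSet (measure_ne_top μ _)
      intro ω hω
      exact le_trans hω (hqmono 0 j (by omega) hj)
    have hBj : (μ (B ⁻¹' Set.Iic (q j))).toReal = G j := (hFB (q j)).symm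
    have hB0 : (μ (B ⁻¹' Set.Iic (q 0))).toReal = G 0 := (hFB (q 0)).symm
    have hSj : (μ (S ⁻¹' Set.Iic (q j))).toReal = F j := (hFS (q j)).symm
    have hle : μ (B ⁻¹' Set.Iic (q 0)) ≤ μ (B ⁻¹' Set.Iic (q j)) := by
      refine measure_mono ?_
      intro ω hω
      exact le_trans hω (hqmono 0 j (by omega) hj)
    rw [hpdef]
    simp only
    rw [hmul, hdiff, ENNReal.toReal_mul, ENNReal.toReal_sub_of_le hle (measure_ne_top μ _),
      hBj, hB0, hSj]
  have hp0 : p 0 = 0 := by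
    rw [hpformula 0 (by omega)]; ring
  have hpnonneg : ∀ j, 0 ≤ p j := fun j => ENNReal.toReal_nonneg
  have hpF : ∀ j, j ≤ n → p j ≤ F j := by
    intro j hj
    rw [hpformula j hj]
    have h1 : G j - G 0 ≤ 1 := by have := hG1 j; have := hG0 0; linarith
    nlinarith [hF0 j hj]
  -- events
  set Ev : ℕ → Set Ω := fun m =>
    if m = n then B ⁻¹' (Set.Ioi (q 0)) \ Dset n else Dset (m + 1) \ Dset m with hEdef
  have hEmeas : ∀ m, MeasurableSet (Ev m) := by
    intro m
    by_cases hm : m = n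
    · have : Ev m = B ⁻¹' (Set.Ioi (q 0)) \ Dset n := by rw [hEdef]; simp [hm]
      rw [this]
      exact (hB measurableSet_Ioi).diff (hDmeas n)
    · have : Ev m = Dset (m + 1) \ Dset m := by rw [hEdef]; simp [hm]
      rw [this]
      exact (hDmeas (m + 1)).diff (hDmeas m)
  set P : ℕ → ℝ := fun m => (μ (Ev m)).toReal with hPdef
  have hPnonneg : ∀ m, 0 ≤ P m := fun m => ENNReal.toReal_nonneg
  have hDsub : ∀ i j, i ≤ j → j ≤ n → Dset i ⊆ Dset j := by
    intro i j hij hj ω hω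
    obtain ⟨⟨h1, h2⟩, h3⟩ := hω
    exact ⟨⟨h1, le_trans h2 (hqmono i j hij hj)⟩, le_trans h3 (hqmono i j hij hj)⟩
  have hPd : ∀ m, m < n → P m = p (m + 1) - p m := by
    intro m hm
    have hEm : Ev m = Dset (m + 1) \ Dset m := by rw [hEdef]; simp only [if_neg (by omega : ¬ m = n)]
    rw [hPdef]
    simp only
    rw [hEm, measure_diff (hDsub m (m + 1) (by omega) (by omega)) (hDmeas m).nullMeasurableSet
      (measure_ne_top μ _),
      ENNReal.toReal_sub_of_le (measure_mono (hDsub m (m + 1) (by omega) (by omega)))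
        (measure_ne_top μ _)]
  have hPsum : ∀ j, j ≤ n → ∑ m ∈ Finset.range j, P m = p j := by
    intro j hj
    have : ∑ m ∈ Finset.range j, P m = ∑ m ∈ Finset.range j, (p (m + 1) - p m) := by
      refine Finset.sum_congr rfl fun m hm => ?_
      exact hPd m (by simp only [Finset.mem_range] at hm; omega)
    rw [this, Finset.sum_range_sub, hp0, sub_zero]
  have hPtot : ∑ m ∈ Finset.range (n + 1), P m ≤ 1 := by
    have hEn : Ev n = B ⁻¹' (Set.Ioi (q 0)) \ Dset n := by rw [hEdef]; simp
    have hsub : Dset n ⊆ B ⁻¹' (Set.Ioi (q 0)) := fun ω hω => hω.1.1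
    have hPn : P n = (μ (B ⁻¹' (Set.Ioi (q 0)))).toReal - p n := by
      rw [hPdef]
      simp only
      rw [hEn, measure_diff hsub (hDmeas n).nullMeasurableSet (measure_ne_top μ _),
        ENNReal.toReal_sub_of_le (measure_mono hsub) (measure_ne_top μ _)]
    rw [Finset.sum_range_succ, hPsum n le_rfl, hPn]
    have := hmuR (B ⁻¹' (Set.Ioi (q 0)))
    linarith
  have hPn1 : P n ≤ 1 := by
    have h1 : ∑ m ∈ Finset.range (n + 1), P m = ∑ m ∈ Finset.range n, P m + P n :=
      Finset.sum_range_succ _ _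
    have h2 : 0 ≤ ∑ m ∈ Finset.range n, P m := Finset.sum_nonneg fun m _ => hPnonneg m
    linarith [hPtot]
  -- the suffix coefficient
  set D : ℕ → ℝ := fun j => a (j + 1) / F (j + 1) - a j / F j + h with hDDdef
  have hDneg : ∀ j, j < n → D j ≤ 0 := by
    intro j hj
    have hu : 0 < F j := hF0 j (by omega)
    have hu' : 0 < F (j + 1) := hF0 (j + 1) (by omega)
    have huu : F j ≤ F (j + 1) := hFmono j (j + 1) (by omega) (by omega)
    have hb0 : 0 ≤ a (j + 1) := ha0 (j + 1) (by omega)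
    have h1 : a (j + 1) / F (j + 1) ≤ a (j + 1) / F j := by gcongr
    have h2 : h ≤ h / F j := by
      rw [le_div_iff₀ hu]
      nlinarith [hF1 j (by omega : j ≤ n)]
    have h3 : a (j + 1) / F j + h / F j = (a (j + 1) + h) / F j := (add_div _ _ _).symm
    have h4 : a j = a (j + 1) + h := hastep j hj
    simp only [hDDdef]
    rw [h4]
    linarith
  have hDabs : ∀ j, j < n → -D j ≤ (1 + CS) * h / γ := by
    intro j hj
    have hu : 0 < F j := hF0 j (by omega)
    have hu' : 0 < F (j + 1) := hF0 (j + 1) (by omega)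
    have huγ : γ ≤ F j := hFγ j (by omega)
    have hu'γ : γ ≤ F (j + 1) := hFγ (j + 1) (by omega)
    have huu : F j ≤ F (j + 1) := hFmono j (j + 1) (by omega) (by omega)
    have hb0 : 0 ≤ a (j + 1) := ha0 (j + 1) (by omega)
    have hb1 : a (j + 1) ≤ 1 := ha1 (j + 1) (by omega)
    have key1 : a (j + 1) / F j - a (j + 1) / F (j + 1) ≤ CS * h / γ := by
      have e : a (j + 1) / F j - a (j + 1) / F (j + 1)
          = a (j + 1) * (F (j + 1) - F j) / (F j * F (j + 1)) := by
        field_simp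
      have hnum : a (j + 1) * (F (j + 1) - F j) ≤ CS * γ * h := by
        nlinarith [hΔF j hj, hFmono j (j + 1) (by omega) (by omega : j + 1 ≤ n)]
      have hden : γ * γ ≤ F j * F (j + 1) := by nlinarith
      have hd : a (j + 1) * (F (j + 1) - F j) / (F j * F (j + 1)) ≤ CS * γ * h / (γ * γ) := by
        apply div_le_div₀ (by positivity) hnum (by positivity) hden
      have e2 : CS * γ * h / (γ * γ) = CS * h / γ := by
        field_simp
      rw [e]
      rw [e2] at hd
      exact hd
    have key2 : h / F j ≤ h / γ := by gcongr
    have h4 : a j = a (j + 1) + h := hastep j hj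
    have h5 : (a (j + 1) + h) / F j = a (j + 1) / F j + h / F j := add_div _ _ _
    simp only [hDDdef]
    rw [h4, h5]
    have : (1 + CS) * h / γ = CS * h / γ + h / γ := by ring
    rw [this]
    linarith [hh.le]
  have hDF : ∀ j, j < n → -D j * F j ≤ (1 + CS) * h := by
    intro j hj
    have hu : 0 < F j := hF0 j (by omega)
    have hu' : 0 < F (j + 1) := hF0 (j + 1) (by omega)
    have huγ : γ ≤ F j := hFγ j (by omega)
    have hu'γ : γ ≤ F (j + 1) := hFγ (j + 1) (by omega)
    have huu : F j ≤ F (j + 1) := hFmono j (j + 1) (by omega) (by omega)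
    have hb0 : 0 ≤ a (j + 1) := ha0 (j + 1) (by omega)
    have hb1 : a (j + 1) ≤ 1 := ha1 (j + 1) (by omega)
    have h4 : a j = a (j + 1) + h := hastep j hj
    have e : -D j * F j
        = a (j + 1) * (F (j + 1) - F j) / F (j + 1) + h * (1 - F j) := by
      simp only [hDDdef]
      rw [h4]
      field_simp
      ring
    have key3 : a (j + 1) * (F (j + 1) - F j) / F (j + 1) ≤ CS * h := by
      have hnum : a (j + 1) * (F (j + 1) - F j) ≤ CS * γ * h := by
        nlinarith [hΔF j hj]
      have hd : a (j + 1) * (F (j + 1) - F j) / F (j + 1) ≤ CS * γ * h / γ :=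
        div_le_div₀ (by positivity) hnum hγ0 hu'γ
      have e2 : CS * γ * h / γ = CS * h := by field_simp
      rw [e2] at hd
      exact hd
    have key4 : h * (1 - F j) ≤ h := by nlinarith [hF1 j (by omega : j ≤ n)]
    rw [e]
    linarith
  have hDnn : ∀ j, j < n → 0 ≤ -D j := fun j hj => neg_nonneg.mpr (hDneg j hj)
  -- diagonal bound
  have hwh0 : (0:ℝ) ≤ w + h := by linarith [hh.le]
  have hwhγ : w + h ≤ (w + h) / γ := by
    rw [le_div_iff₀ hγ0]
    nlinarith
  have hdiag : ∀ m, m < n → P m * (a (m + 1) / F (m + 1) + h) ^ 2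
      ≤ (4 + 4 * CS) * ((w + h) / γ) := by
    intro m hm
    set β := a (m + 1) / F (m + 1) with hβdef
    have hFm : 0 < F m := hF0 m (by omega)
    have hFm1 : 0 < F (m + 1) := hF0 (m + 1) (by omega)
    have hFm1γ : γ ≤ F (m + 1) := hFγ (m + 1) (by omega)
    have hb0 : 0 ≤ β := div_nonneg (ha0 (m + 1) (by omega)) hFm1.le
    have hbγ : β ≤ 1 / γ := div_le_div₀ zero_le_one (ha1 (m + 1) (by omega)) hγ0 hFm1γ
    have hΔF' : F (m + 1) - F m ≤ CS * γ * h := hΔF m hm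
    have hΔF0 : 0 ≤ F (m + 1) - F m := by
      linarith [hFmono m (m + 1) (by omega) (by omega : m + 1 ≤ n)]
    have hΔG0 : 0 ≤ G (m + 1) - G m := by
      linarith [hGmono m (m + 1) (by omega) (by omega : m + 1 ≤ n)]
    have hΔG1 : G (m + 1) - G m ≤ 1 := by linarith [hG1 (m + 1), hG0 m]
    have hPle : P m ≤ F (m + 1) * (G (m + 1) - G m) + (F (m + 1) - F m) := by
      rw [hPd m hm, hpformula (m + 1) (by omega), hpformula m (by omega)]
      have h1 : G m - G 0 ≤ 1 := by linarith [hG1 m, hG0 0]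
      have h2 : 0 ≤ G m - G 0 := by linarith [hGmono 0 m (by omega) (by omega : m ≤ n)]
      nlinarith
    have hsq : (β + h) ^ 2 ≤ 2 * β ^ 2 + 2 * h ^ 2 := by nlinarith [sq_nonneg (β - h)]
    have hQ0 : 0 ≤ F (m + 1) * (G (m + 1) - G m) + (F (m + 1) - F m) := by nlinarith
    have step : P m * (β + h) ^ 2
        ≤ (F (m + 1) * (G (m + 1) - G m) + (F (m + 1) - F m)) * (2 * β ^ 2 + 2 * h ^ 2) :=
      mul_le_mul hPle hsq (sq_nonneg _) hQ0
    have hFβ : F (m + 1) * β = a (m + 1) := by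
      rw [hβdef]
      field_simp
    have b1 : F (m + 1) * (G (m + 1) - G m) * β ^ 2 ≤ (w + h) / γ := by
      have e : F (m + 1) * (G (m + 1) - G m) * β ^ 2
          = (a (m + 1) * (G (m + 1) - G m)) * β := by rw [← hFβ]; ring
      rw [e]
      calc (a (m + 1) * (G (m + 1) - G m)) * β ≤ (w + h) * (1 / γ) := by
            apply mul_le_mul (hΔG m hm) hbγ hb0 hwh0
        _ = (w + h) / γ := by ring
    have b2 : F (m + 1) * (G (m + 1) - G m) * h ^ 2 ≤ (w + h) / γ := by
      have hF1' : F (m + 1) ≤ 1 := hF1 (m + 1) (by omega)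
      have c1 : F (m + 1) * (G (m + 1) - G m) ≤ 1 := by nlinarith
      have c0 : 0 ≤ F (m + 1) * (G (m + 1) - G m) := by positivity
      have c2 : F (m + 1) * (G (m + 1) - G m) * h ^ 2 ≤ h ^ 2 := by nlinarith [sq_nonneg h]
      have c3 : h ^ 2 ≤ h := by nlinarith
      linarith
    have b3 : (F (m + 1) - F m) * β ^ 2 ≤ CS * ((w + h) / γ) := by
      have hβ2 : β ^ 2 ≤ (1 / γ) ^ 2 := by nlinarith
      have e2 : CS * γ * h * (1 / γ) ^ 2 = CS * (h / γ) := by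
        field_simp
      have : (F (m + 1) - F m) * β ^ 2 ≤ CS * γ * h * (1 / γ) ^ 2 := by
        apply mul_le_mul hΔF' hβ2 (sq_nonneg _) (by positivity)
      rw [e2] at this
      refine this.trans ?_
      have : h / γ ≤ (w + h) / γ := by gcongr; linarith
      exact mul_le_mul_of_nonneg_left this hCS
    have b4 : (F (m + 1) - F m) * h ^ 2 ≤ CS * ((w + h) / γ) := by
      have h1 : (F (m + 1) - F m) * h ^ 2 ≤ CS * γ * h * h ^ 2 := by nlinarith
      have hγh2 : γ * h ^ 2 ≤ 1 := by nlinarith [hγ1, hh1, hh.le, hγ0.le]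
      have h2 : CS * γ * h * h ^ 2 ≤ CS * h := by
        nlinarith [mul_nonneg hCS (mul_nonneg hh.le (sub_nonneg.2 hγh2))]
      have h3 : CS * h ≤ CS * ((w + h) / γ) := by
        apply mul_le_mul_of_nonneg_left _ hCS
        linarith
      linarith
    have expand : (F (m + 1) * (G (m + 1) - G m) + (F (m + 1) - F m)) * (2 * β ^ 2 + 2 * h ^ 2)
        = 2 * (F (m + 1) * (G (m + 1) - G m) * β ^ 2) + 2 * (F (m + 1) * (G (m + 1) - G m) * h ^ 2)
          + 2 * ((F (m + 1) - F m) * β ^ 2) + 2 * ((F (m + 1) - F m) * h ^ 2) := by ring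
    rw [expand] at step
    linarith
  -- values of Y
  have hYc1 : ∀ j ω, B ω ≤ q 0 → Y j ω = 1 := by
    intro j ω hω
    rw [hY j ω, if_pos hω, if_neg (not_lt.mpr hω)]
    simp
  have hYc2 : ∀ j ω, q 0 < B ω →
      Y j ω = (if max (B ω) (S ω) ≤ q j then 1 else 0) / F j := by
    intro j ω hω
    rw [hY j ω, if_neg (not_le.mpr hω), if_pos hω]
    simp only [hFdef, one_mul, zero_add]
  -- measurability
  have hYm : ∀ j, Measurable (Y j) := by
    intro j
    have e : Y j = fun ω => (if B ω ≤ q 0 then (1:ℝ) else 0) +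
        (if q 0 < B ω then (1:ℝ) else 0) *
          (if max (B ω) (S ω) ≤ q j then (1:ℝ) else 0) / FS (q j) := funext (hY j)
    rw [e]
    apply Measurable.add
    · exact Measurable.ite (measurableSet_le hB measurable_const) measurable_const
        measurable_const
    · apply Measurable.div_const
      apply Measurable.mul
      · exact Measurable.ite (measurableSet_lt measurable_const hB) measurable_const
          measurable_const
      · exact Measurable.ite (measurableSet_le (hB.max hS) measurable_const) measurable_const
          measurable_const
  have hYsm : ∀ j, Measurable (Ysuf j) := by
    intro j
    have e : Ysuf j = fun ω => (v - q (j + 1)) * Y (j + 1) ω - (v - q j) * Y j ω :=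
      funext (hYsuf j)
    rw [e]
    exact ((hYm (j + 1)).const_mul _).sub ((hYm j).const_mul _)
  set Z : Ω → ℝ := fun ω => ∑ j ∈ Finset.range n, x j * Ysuf j ω with hZdef
  have hZm : Measurable Z :=
    Finset.measurable_sum _ fun j _ => (hYsm j).const_mul (x j)
  -- boundedness
  have hYb : ∀ j, j ≤ n → ∀ ω, |Y j ω| ≤ 1 / γ := by
    intro j hj ω
    rcases le_or_gt (B ω) (q 0) with hω | hω
    · rw [hYc1 j ω hω, abs_one]
      rw [le_div_iff₀ hγ0]
      nlinarith
    · rw [hYc2 j ω hω]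
      rcases le_or_gt (max (B ω) (S ω)) (q j) with hm | hm
      · rw [if_pos hm, abs_div, abs_one, abs_of_pos (hF0 j hj)]
        exact one_div_le_one_div_of_le hγ0 (hFγ j hj)
      · rw [if_neg (not_le.mpr hm)]
        simp only [zero_div, abs_zero]
        positivity
  have hYsb : ∀ j, j < n → ∀ ω, |Ysuf j ω| ≤ 2 / γ := by
    intro j hj ω
    rw [hYsuf j ω]
    have e1 : |(v - q (j + 1)) * Y (j + 1) ω| ≤ 1 / γ := by
      rw [abs_mul]
      have ha' : |v - q (j + 1)| ≤ 1 := by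
        rw [abs_of_nonneg (ha0 (j + 1) (by omega))]
        exact ha1 (j + 1) (by omega)
      have := hYb (j + 1) (by omega) ω
      nlinarith [abs_nonneg (Y (j + 1) ω), abs_nonneg (v - q (j + 1)), hγ0]
    have e2 : |(v - q j) * Y j ω| ≤ 1 / γ := by
      rw [abs_mul]
      have ha' : |v - q j| ≤ 1 := by
        rw [abs_of_nonneg (ha0 j (by omega))]
        exact ha1 j (by omega)
      have := hYb j (by omega) ω
      nlinarith [abs_nonneg (Y j ω), abs_nonneg (v - q j), hγ0]
    calc |(v - q (j + 1)) * Y (j + 1) ω - (v - q j) * Y j ω|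
        ≤ |(v - q (j + 1)) * Y (j + 1) ω| + |(v - q j) * Y j ω| := abs_sub _ _
      _ ≤ 1 / γ + 1 / γ := add_le_add e1 e2
      _ = 2 / γ := by ring
  have hZb : ∀ ω, |Z ω| ≤ (∑ j ∈ Finset.range n, |x j|) * (2 / γ) := by
    intro ω
    calc |Z ω| ≤ ∑ j ∈ Finset.range n, |x j * Ysuf j ω| :=
          Finset.abs_sum_le_sum_abs _ _
      _ ≤ ∑ j ∈ Finset.range n, |x j| * (2 / γ) := by
          refine Finset.sum_le_sum fun j hj => ?_
          rw [abs_mul]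
          exact mul_le_mul_of_nonneg_left
            (hYsb j (by simpa using hj) ω) (abs_nonneg _)
      _ = (∑ j ∈ Finset.range n, |x j|) * (2 / γ) := (Finset.sum_mul _ _ _).symm
  -- event value function
  set sval : ℕ → ℝ := fun m =>
    if m = n then h * ∑ j ∈ Finset.range n, x j
    else x m * (a (m + 1) / F (m + 1) + h) + (∑ j ∈ Finset.Ico (m + 1) n, x j * D j)
      + h * ∑ j ∈ Finset.range m, x j with hsdef
  set W : Ω → ℝ := fun ω => ∑ j ∈ Finset.range n, x j * (Ysuf j ω + h) with hWdef
  have hEvlt : ∀ m, m < n → Ev m = Dset (m + 1) \ Dset m := by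
    intro m hm
    rw [hEdef]
    simp [Nat.ne_of_lt hm]
  have hEvn : Ev n = B ⁻¹' (Set.Ioi (q 0)) \ Dset n := by rw [hEdef]; simp
  have hDmem : ∀ j ω, ω ∈ Dset j ↔ ((q 0 < B ω ∧ B ω ≤ q j) ∧ S ω ≤ q j) := by
    intro j ω
    simp only [hDdef, Set.mem_inter_iff, Set.mem_preimage, Set.mem_Ioc, Set.mem_Iic]
  have hclaim : ∀ (f : ℝ → ℝ), f 0 = 0 → ∀ ω,
      f (W ω) = ∑ m ∈ Finset.range (n + 1), (Ev m).indicator (fun _ => f (sval m)) ω := by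
    intro f hf0 ω
    rcases le_or_gt (B ω) (q 0) with hB0 | hB0
    · have hW : W ω = 0 := by
        rw [hWdef]
        simp only
        refine Finset.sum_eq_zero fun j hj => ?_
        have hj' : j < n := Finset.mem_range.mp hj
        rw [hYsuf j ω, hYc1 (j + 1) ω hB0, hYc1 j ω hB0]
        have hz : (v - q (j + 1)) * 1 - (v - q j) * 1 + h = 0 := by
          have := hstep j (by omega)
          linarith
        rw [hz, mul_zero]
      have hind : ∀ m ∈ Finset.range (n + 1), (Ev m).indicator (fun _ => f (sval m)) ω = 0 := by
        intro m hm
        apply Set.indicator_of_notMem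
        intro hmem
        rcases Nat.lt_or_ge m n with hmn | hmn
        · rw [hEvlt m hmn] at hmem
          have := ((hDmem (m + 1) ω).mp hmem.1).1.1
          linarith
        · have hmn' : m = n := by simp only [Finset.mem_range] at hm; omega
          rw [hmn', hEvn] at hmem
          have : q 0 < B ω := hmem.1
          linarith
      rw [hW, hf0, Finset.sum_eq_zero hind]
    · set M := max (B ω) (S ω) with hM
      have hMB : B ω ≤ M := le_max_left _ _
      have hMS : S ω ≤ M := le_max_right _ _
      have hq0M : q 0 < M := lt_of_lt_of_le hB0 hMB
      rcases lt_or_ge (q n) M with hMn | hMn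
      · -- M beyond the grid
        have hYz : ∀ j, j ≤ n → Y j ω = 0 := by
          intro j hj
          rw [hYc2 j ω hB0, if_neg, zero_div]
          push_neg
          exact lt_of_le_of_lt (hqmono j n hj le_rfl) hMn
        have hW : W ω = sval n := by
          rw [hWdef]
          simp only [hsdef, if_pos rfl]
          have e : ∀ j ∈ Finset.range n, x j * (Ysuf j ω + h) = x j * h := by
            intro j hj
            have hj' : j < n := Finset.mem_range.mp hj
            rw [hYsuf j ω, hYz (j + 1) (by omega), hYz j (by omega)]
            ring
          rw [Finset.sum_congr rfl e, ← Finset.sum_mul, mul_comm]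
        have hmem : ω ∈ Ev n := by
          rw [hEvn]
          refine ⟨hB0, fun hD => ?_⟩
          have := (hDmem n ω).mp hD
          have : M ≤ q n := max_le this.1.2 this.2
          linarith
        have hnot : ∀ b ∈ Finset.range (n + 1), b ≠ n →
            (Ev b).indicator (fun _ => f (sval b)) ω = 0 := by
          intro b hb hbn
          apply Set.indicator_of_notMem
          intro hmemb
          have hbn' : b < n := by simp only [Finset.mem_range] at hb; omega
          rw [hEvlt b hbn'] at hmemb
          have h1 := (hDmem (b + 1) ω).mp hmemb.1
          have : M ≤ q (b + 1) := max_le h1.1.2 h1.2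
          have : M ≤ q n := le_trans this (hqmono (b + 1) n (by omega) le_rfl)
          linarith
        rw [Finset.sum_eq_single_of_mem n (Finset.mem_range.mpr (by omega)) hnot,
          Set.indicator_of_mem hmem]
        exact congrArg f hW
      · -- M inside the grid: find the unique cell
        set T := (Finset.range n).filter (fun i => q i < M) with hT
        have hT0 : 0 ∈ T := by
          rw [hT, Finset.mem_filter, Finset.mem_range]
          exact ⟨by omega, hq0M⟩
        have hTne : T.Nonempty := ⟨0, hT0⟩
        set m := T.max' hTne with hm
        have hmT : m ∈ T := Finset.max'_mem T hTne
        have hmn : m < n := Finset.mem_range.mp (Finset.mem_filter.mp hmT).1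
        have hqm : q m < M := (Finset.mem_filter.mp hmT).2
        have hub : M ≤ q (m + 1) := by
          by_cases hcase : m + 1 = n
          · rw [hcase]; exact hMn
          · by_contra hcon
            push_neg at hcon
            have hmem' : m + 1 ∈ T := by
              rw [hT, Finset.mem_filter, Finset.mem_range]
              exact ⟨by omega, hcon⟩
            have := Finset.le_max' T (m + 1) hmem'
            omega
        have key : ∀ j, j ≤ n → (M ≤ q j ↔ m < j) := by
          intro j hj
          constructor
          · intro hMj
            by_contra hcon
            push_neg at hcon
            have : q j ≤ q m := hqmono j m hcon (by omega)
            linarith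
          · intro hmj
            exact le_trans hub (hqmono (m + 1) j hmj hj)
        have hYval : ∀ j, j ≤ n → Y j ω = (if m < j then 1 else 0) / F j := by
          intro j hj
          rw [hYc2 j ω hB0]
          by_cases hc : m < j
          · rw [if_pos ((key j hj).mpr hc), if_pos hc]
          · rw [if_neg (fun hM' => hc ((key j hj).mp hM')), if_neg hc]
        have hW : W ω = sval m := by
          have e : ∀ j ∈ Finset.range n, x j * (Ysuf j ω + h)
              = if j < m then x j * h
                else if j = m then x m * (a (m + 1) / F (m + 1) + h) else x j * D j := by
            intro j hj
            have hj' : j < n := Finset.mem_range.mp hj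
            rw [hYsuf j ω, hYval (j + 1) (by omega), hYval j (by omega)]
            rcases lt_trichotomy j m with hc | hc | hc
            · rw [if_pos hc, if_neg (by omega : ¬ m < j + 1), if_neg (by omega : ¬ m < j)]
              rw [zero_div, zero_div]
              ring
            · rw [if_neg (by omega : ¬ j < m), if_pos hc, if_pos (by omega : m < j + 1),
                if_neg (by omega : ¬ m < j), zero_div]
              subst hc
              simp only [hadef, hFdef]
              rw [mul_zero, sub_zero, mul_one_div]
            · rw [if_neg (by omega : ¬ j < m), if_neg (by omega : ¬ j = m),
                if_pos (by omega : m < j + 1), if_pos hc]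
              simp only [hDDdef, hadef, hFdef]
              rw [mul_one_div, mul_one_div]
          rw [hWdef]
          simp only
          rw [Finset.sum_congr rfl e]
          rw [Finset.range_eq_Ico,
            ← Finset.sum_Ico_consecutive _ (Nat.zero_le (m + 1)) (by omega : m + 1 ≤ n),
            ← Finset.range_eq_Ico, Finset.sum_range_succ]
          have e1 : ∀ j ∈ Finset.range m,
              (if j < m then x j * h
                else if j = m then x m * (a (m + 1) / F (m + 1) + h) else x j * D j)
              = x j * h := fun j hj => if_pos (Finset.mem_range.mp hj)
          have e2 : (if m < m then x m * h
              else if m = m then x m * (a (m + 1) / F (m + 1) + h) else x m * D m)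
              = x m * (a (m + 1) / F (m + 1) + h) := by
            rw [if_neg (lt_irrefl m), if_pos rfl]
          have e3 : ∀ j ∈ Finset.Ico (m + 1) n,
              (if j < m then x j * h
                else if j = m then x m * (a (m + 1) / F (m + 1) + h) else x j * D j)
              = x j * D j := by
            intro j hj
            have : m + 1 ≤ j := (Finset.mem_Ico.mp hj).1
            rw [if_neg (by omega), if_neg (by omega)]
          rw [Finset.sum_congr rfl e1, e2, Finset.sum_congr rfl e3]
          simp only [hsdef, if_neg (by omega : ¬ m = n)]
          rw [← Finset.sum_mul]
          ring
        have hmem : ω ∈ Ev m := by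
          rw [hEvlt m hmn]
          refine ⟨(hDmem (m + 1) ω).mpr ⟨⟨hB0, le_trans hMB hub⟩, le_trans hMS hub⟩,
            fun hD => ?_⟩
          have h1 := (hDmem m ω).mp hD
          have : M ≤ q m := max_le h1.1.2 h1.2
          linarith
        have hnot : ∀ b ∈ Finset.range (n + 1), b ≠ m →
            (Ev b).indicator (fun _ => f (sval b)) ω = 0 := by
          intro b hb hbm
          apply Set.indicator_of_notMem
          intro hmemb
          rcases Nat.lt_or_ge b n with hbn | hbn
          · rw [hEvlt b hbn] at hmemb
            obtain ⟨hb1, hb2⟩ := hmemb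
            have h1 := (hDmem (b + 1) ω).mp hb1
            have hMb1 : M ≤ q (b + 1) := max_le h1.1.2 h1.2
            have hgt : q b < M := by
              by_contra hcon
              push_neg at hcon
              exact hb2 ((hDmem b ω).mpr ⟨⟨hB0, le_trans hMB hcon⟩, le_trans hMS hcon⟩)
            have hba : m < b + 1 := (key (b + 1) (by omega)).mp hMb1
            have hbb : ¬ m < b := fun hc => absurd ((key b (by omega)).mpr hc)
              (not_le.mpr hgt)
            omega
          · have hbn' : b = n := by simp only [Finset.mem_range] at hb; omega
            rw [hbn', hEvn] at hmemb
            exact hmemb.2 ((hDmem n ω).mpr ⟨⟨hB0, le_trans hMB hMn⟩, le_trans hMS hMn⟩)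
        rw [Finset.sum_eq_single_of_mem m (Finset.mem_range.mpr (by omega)) hnot,
          Set.indicator_of_mem hmem]
        exact congrArg f hW
  -- integral identity
  have hInt : ∫ ω, (W ω) ^ 2 ∂μ = ∑ m ∈ Finset.range (n + 1), P m * (sval m) ^ 2 := by
    have hWsq : (fun ω => (W ω) ^ 2)
        = fun ω => ∑ m ∈ Finset.range (n + 1), (Ev m).indicator (fun _ => (sval m) ^ 2) ω := by
      funext ω
      exact hclaim (fun t => t ^ 2) (by norm_num) ω
    rw [hWsq, integral_finset_sum]
    · refine Finset.sum_congr rfl fun m _ => ?_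
      rw [integral_indicator_const _ (hEmeas m)]
      rw [hPdef]
      simp only [smul_eq_mul]
      rfl
    · exact fun m _ => (integrable_const _).indicator (hEmeas m)
  -- variance reduction
  set c : ℝ := -(h * ∑ j ∈ Finset.range n, x j) with hcdef
  have hZc : (fun ω => (Z ω - c) ^ 2) = fun ω => (W ω) ^ 2 := by
    funext ω
    have : Z ω - c = W ω := by
      rw [hZdef, hWdef, hcdef]
      simp only
      have e : ∀ j ∈ Finset.range n, x j * (Ysuf j ω + h) = x j * Ysuf j ω + x j * h :=
        fun j _ => mul_add _ _ _
      rw [Finset.sum_congr rfl e, Finset.sum_add_distrib, ← Finset.sum_mul]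
      ring
    rw [this]
  have hvar : variance Z μ ≤ ∫ ω, (W ω) ^ 2 ∂μ := by
    have hv := scb_var_le μ Z hZm ((∑ j ∈ Finset.range n, |x j|) * (2 / γ)) hZb c
    rwa [hZc] at hv
  -- final estimate
  set Sx := ∑ j ∈ Finset.range n, x j ^ 2 with hSxdef
  have hSx0 : 0 ≤ Sx := Finset.sum_nonneg fun j _ => sq_nonneg _
  set R := (w + h) / γ with hRdef
  have hR0 : 0 ≤ R := by positivity
  have hsubSx : ∀ m, m ≤ n → ∑ j ∈ Finset.range m, x j ^ 2 ≤ Sx := by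
    intro m hm
    rw [hSxdef]
    exact Finset.sum_le_sum_of_subset_of_nonneg
      (Finset.range_subset_range.mpr hm) (fun j _ _ => sq_nonneg _)
  have hT3base : ∀ m, m ≤ n → (h * ∑ j ∈ Finset.range m, x j) ^ 2 ≤ h * Sx := by
    intro m hm
    have c1 : (∑ j ∈ Finset.range m, x j) ^ 2
        ≤ (Finset.range m).card * ∑ j ∈ Finset.range m, x j ^ 2 :=
      sq_sum_le_card_mul_sum_sq
    rw [Finset.card_range] at c1
    have c2 : ((m : ℝ)) * (∑ j ∈ Finset.range m, x j ^ 2) ≤ (n : ℝ) * Sx := by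
      have hmn : (m : ℝ) ≤ (n : ℝ) := by exact_mod_cast hm
      have := hsubSx m hm
      have h0 : 0 ≤ ∑ j ∈ Finset.range m, x j ^ 2 :=
        Finset.sum_nonneg fun j _ => sq_nonneg _
      nlinarith
    have c3 : h ^ 2 * ((n : ℝ) * Sx) ≤ h * Sx := by
      nlinarith [hnh, hh.le, hSx0, mul_nonneg hh.le hSx0]
    calc (h * ∑ j ∈ Finset.range m, x j) ^ 2
        = h ^ 2 * (∑ j ∈ Finset.range m, x j) ^ 2 := by ring
      _ ≤ h ^ 2 * ((m : ℝ) * ∑ j ∈ Finset.range m, x j ^ 2) := by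
          apply mul_le_mul_of_nonneg_left c1 (sq_nonneg h)
      _ ≤ h ^ 2 * ((n : ℝ) * Sx) := by apply mul_le_mul_of_nonneg_left c2 (sq_nonneg h)
      _ ≤ h * Sx := c3
  have hhR : h ≤ R := by
    rw [hRdef, le_div_iff₀ hγ0]
    nlinarith
  have hPsum_n : ∑ m ∈ Finset.range n, P m ≤ 1 := by
    have := Finset.sum_range_succ P n
    have h0 := hPnonneg n
    linarith [hPtot]
  -- term 1
  have hT1 : ∑ m ∈ Finset.range n, P m * (x m * (a (m + 1) / F (m + 1) + h)) ^ 2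
      ≤ (4 + 4 * CS) * R * Sx := by
    calc ∑ m ∈ Finset.range n, P m * (x m * (a (m + 1) / F (m + 1) + h)) ^ 2
        ≤ ∑ m ∈ Finset.range n, ((4 + 4 * CS) * R) * x m ^ 2 := by
          refine Finset.sum_le_sum fun m hm => ?_
          have hm' : m < n := Finset.mem_range.mp hm
          have e : P m * (x m * (a (m + 1) / F (m + 1) + h)) ^ 2
              = (P m * (a (m + 1) / F (m + 1) + h) ^ 2) * x m ^ 2 := by ring
          rw [e]
          exact mul_le_mul_of_nonneg_right (by simpa [hRdef] using hdiag m hm') (sq_nonneg _)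
      _ = (4 + 4 * CS) * R * Sx := by rw [← Finset.mul_sum, hSxdef]
  -- term 2
  have hCS1γ : 0 ≤ (1 + CS) / γ := by positivity
  have hT2 : ∑ m ∈ Finset.range n, P m * (∑ j ∈ Finset.Ico (m + 1) n, x j * D j) ^ 2
      ≤ (1 + CS) ^ 2 * R * Sx := by
    have step1 : ∀ m ∈ Finset.range n, P m * (∑ j ∈ Finset.Ico (m + 1) n, x j * D j) ^ 2
        ≤ ((1 + CS) / γ) * (P m * ∑ j ∈ Finset.Ico (m + 1) n, -D j * x j ^ 2) := by
      intro m hm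
      have hm' : m < n := Finset.mem_range.mp hm
      have hdnn : ∀ j ∈ Finset.Ico (m + 1) n, 0 ≤ -D j := by
        intro j hj
        exact hDnn j (Finset.mem_Ico.mp hj).2
      have hsq : (∑ j ∈ Finset.Ico (m + 1) n, x j * D j) ^ 2
          = (∑ j ∈ Finset.Ico (m + 1) n, x j * -D j) ^ 2 := by
        have : ∑ j ∈ Finset.Ico (m + 1) n, x j * -D j
            = -(∑ j ∈ Finset.Ico (m + 1) n, x j * D j) := by
          rw [← Finset.sum_neg_distrib]
          exact Finset.sum_congr rfl fun j _ => by ring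
        rw [this, neg_sq]
      have hcs := scb_weighted_cs (Finset.Ico (m + 1) n) (fun j => -D j) x hdnn
      have hsum1 : ∑ j ∈ Finset.Ico (m + 1) n, -D j ≤ (1 + CS) / γ := by
        calc ∑ j ∈ Finset.Ico (m + 1) n, -D j
            ≤ ∑ _j ∈ Finset.Ico (m + 1) n, (1 + CS) * h / γ := by
              refine Finset.sum_le_sum fun j hj => ?_
              exact hDabs j (Finset.mem_Ico.mp hj).2
          _ = ((n - (m + 1) : ℕ) : ℝ) * ((1 + CS) * h / γ) := by
              rw [Finset.sum_const, Nat.card_Ico, nsmul_eq_mul]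
          _ ≤ (1 + CS) / γ := by
              have hcast : ((n - (m + 1) : ℕ) : ℝ) ≤ (n : ℝ) := by
                exact_mod_cast Nat.sub_le n (m + 1)
              have hcast0 : (0:ℝ) ≤ ((n - (m + 1) : ℕ) : ℝ) := by positivity
              have e : ((n - (m + 1) : ℕ) : ℝ) * ((1 + CS) * h / γ)
                  = (((n - (m + 1) : ℕ) : ℝ) * h) * ((1 + CS) / γ) := by ring
              have hnm : ((n - (m + 1) : ℕ) : ℝ) * h ≤ 1 := by
                nlinarith [hh.le]
              rw [e]
              nlinarith [hCS1γ]
      have hsum2 : 0 ≤ ∑ j ∈ Finset.Ico (m + 1) n, -D j * x j ^ 2 :=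
        Finset.sum_nonneg fun j hj => mul_nonneg (hdnn j hj) (sq_nonneg _)
      have hbound : (∑ j ∈ Finset.Ico (m + 1) n, x j * D j) ^ 2
          ≤ ((1 + CS) / γ) * ∑ j ∈ Finset.Ico (m + 1) n, -D j * x j ^ 2 := by
        rw [hsq]
        refine hcs.trans ?_
        exact mul_le_mul_of_nonneg_right hsum1 hsum2
      calc P m * (∑ j ∈ Finset.Ico (m + 1) n, x j * D j) ^ 2
          ≤ P m * (((1 + CS) / γ) * ∑ j ∈ Finset.Ico (m + 1) n, -D j * x j ^ 2) :=
            mul_le_mul_of_nonneg_left hbound (hPnonneg m)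
        _ = ((1 + CS) / γ) * (P m * ∑ j ∈ Finset.Ico (m + 1) n, -D j * x j ^ 2) := by ring
    calc ∑ m ∈ Finset.range n, P m * (∑ j ∈ Finset.Ico (m + 1) n, x j * D j) ^ 2
        ≤ ∑ m ∈ Finset.range n,
            ((1 + CS) / γ) * (P m * ∑ j ∈ Finset.Ico (m + 1) n, -D j * x j ^ 2) :=
          Finset.sum_le_sum step1
      _ = ((1 + CS) / γ) * ∑ m ∈ Finset.range n,
            P m * ∑ j ∈ Finset.Ico (m + 1) n, -D j * x j ^ 2 := by rw [← Finset.mul_sum]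
      _ = ((1 + CS) / γ) * ∑ j ∈ Finset.range n,
            (∑ m ∈ Finset.range j, P m) * (-D j * x j ^ 2) := by
          rw [scb_swap_sum n P (fun j => -D j * x j ^ 2)]
      _ ≤ ((1 + CS) / γ) * ∑ j ∈ Finset.range n, (1 + CS) * h * x j ^ 2 := by
          refine mul_le_mul_of_nonneg_left (Finset.sum_le_sum fun j hj => ?_) hCS1γ
          have hj' : j < n := Finset.mem_range.mp hj
          have hp : ∑ m ∈ Finset.range j, P m = p j := hPsum j (by omega)
          rw [hp]
          have e : p j * (-D j * x j ^ 2) = (p j * -D j) * x j ^ 2 := by ring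
          rw [e]
          refine mul_le_mul_of_nonneg_right ?_ (sq_nonneg _)
          calc p j * -D j ≤ F j * -D j :=
                mul_le_mul_of_nonneg_right (hpF j (by omega)) (hDnn j hj')
            _ = -D j * F j := by ring
            _ ≤ (1 + CS) * h := hDF j hj'
      _ = ((1 + CS) / γ) * ((1 + CS) * h * Sx) := by rw [← Finset.mul_sum, hSxdef]
      _ ≤ (1 + CS) ^ 2 * R * Sx := by
          have hhγR : h / γ ≤ R := by
            rw [hRdef]
            gcongr
            linarith
          have e : ((1 + CS) / γ) * ((1 + CS) * h * Sx) = ((1 + CS) ^ 2 * Sx) * (h / γ) := by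
            ring
          rw [e]
          calc ((1 + CS) ^ 2 * Sx) * (h / γ)
              ≤ ((1 + CS) ^ 2 * Sx) * R :=
                mul_le_mul_of_nonneg_left hhγR (mul_nonneg (sq_nonneg _) hSx0)
            _ = (1 + CS) ^ 2 * R * Sx := by ring
  -- term 3
  have hT3 : ∑ m ∈ Finset.range n, P m * (h * ∑ j ∈ Finset.range m, x j) ^ 2 ≤ R * Sx := by
    calc ∑ m ∈ Finset.range n, P m * (h * ∑ j ∈ Finset.range m, x j) ^ 2
        ≤ ∑ m ∈ Finset.range n, P m * (h * Sx) := by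
          refine Finset.sum_le_sum fun m hm => ?_
          exact mul_le_mul_of_nonneg_left
            (hT3base m (le_of_lt (Finset.mem_range.mp hm))) (hPnonneg m)
      _ = (∑ m ∈ Finset.range n, P m) * (h * Sx) := (Finset.sum_mul _ _ _).symm
      _ ≤ 1 * (h * Sx) := by
          refine mul_le_mul_of_nonneg_right hPsum_n (mul_nonneg hh.le hSx0)
      _ ≤ R * Sx := by
          rw [one_mul]
          exact mul_le_mul_of_nonneg_right hhR hSx0
  -- term 4
  have hT4 : P n * (sval n) ^ 2 ≤ R * Sx := by
    have hs : sval n = h * ∑ j ∈ Finset.range n, x j := by simp [hsdef]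
    rw [hs]
    calc P n * (h * ∑ j ∈ Finset.range n, x j) ^ 2
        ≤ 1 * (h * Sx) := by
          apply mul_le_mul hPn1 (hT3base n le_rfl) (sq_nonneg _) zero_le_one
      _ ≤ R * Sx := by
          rw [one_mul]
          exact mul_le_mul_of_nonneg_right hhR hSx0
  -- combine
  have hsq3 : ∀ m, m < n → P m * (sval m) ^ 2
      ≤ 3 * (P m * (x m * (a (m + 1) / F (m + 1) + h)) ^ 2)
        + 3 * (P m * (∑ j ∈ Finset.Ico (m + 1) n, x j * D j) ^ 2)
        + 3 * (P m * (h * ∑ j ∈ Finset.range m, x j) ^ 2) := by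
    intro m hm
    have hs : sval m = x m * (a (m + 1) / F (m + 1) + h)
        + (∑ j ∈ Finset.Ico (m + 1) n, x j * D j) + h * ∑ j ∈ Finset.range m, x j := by
      simp only [hsdef]
      rw [if_neg (by omega : ¬ m = n)]
    rw [hs]
    set A := x m * (a (m + 1) / F (m + 1) + h)
    set Bv := ∑ j ∈ Finset.Ico (m + 1) n, x j * D j
    set Cv := h * ∑ j ∈ Finset.range m, x j
    have hsq : (A + Bv + Cv) ^ 2 ≤ 3 * A ^ 2 + 3 * Bv ^ 2 + 3 * Cv ^ 2 := by
      nlinarith [sq_nonneg (A - Bv), sq_nonneg (A - Cv), sq_nonneg (Bv - Cv)]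
    nlinarith [mul_le_mul_of_nonneg_left hsq (hPnonneg m)]
  have hmain : ∑ m ∈ Finset.range (n + 1), P m * (sval m) ^ 2
      ≤ (3 * ((4 + 4 * CS) * R * Sx) + 3 * ((1 + CS) ^ 2 * R * Sx) + 3 * (R * Sx)) + R * Sx := by
    rw [Finset.sum_range_succ]
    have h1 : ∑ m ∈ Finset.range n, P m * (sval m) ^ 2
        ≤ ∑ m ∈ Finset.range n,
            (3 * (P m * (x m * (a (m + 1) / F (m + 1) + h)) ^ 2)
              + 3 * (P m * (∑ j ∈ Finset.Ico (m + 1) n, x j * D j) ^ 2)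
              + 3 * (P m * (h * ∑ j ∈ Finset.range m, x j) ^ 2)) := by
      refine Finset.sum_le_sum fun m hm => hsq3 m (Finset.mem_range.mp hm)
    have h2 : ∑ m ∈ Finset.range n,
        (3 * (P m * (x m * (a (m + 1) / F (m + 1) + h)) ^ 2)
          + 3 * (P m * (∑ j ∈ Finset.Ico (m + 1) n, x j * D j) ^ 2)
          + 3 * (P m * (h * ∑ j ∈ Finset.range m, x j) ^ 2))
        = 3 * (∑ m ∈ Finset.range n, P m * (x m * (a (m + 1) / F (m + 1) + h)) ^ 2)
          + 3 * (∑ m ∈ Finset.range n, P m * (∑ j ∈ Finset.Ico (m + 1) n, x j * D j) ^ 2)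
          + 3 * (∑ m ∈ Finset.range n, P m * (h * ∑ j ∈ Finset.range m, x j) ^ 2) := by
      rw [Finset.sum_add_distrib, Finset.sum_add_distrib, ← Finset.mul_sum, ← Finset.mul_sum,
        ← Finset.mul_sum]
    have := h1.trans (le_of_eq h2)
    have hfin : 3 * (∑ m ∈ Finset.range n, P m * (x m * (a (m + 1) / F (m + 1) + h)) ^ 2)
          + 3 * (∑ m ∈ Finset.range n, P m * (∑ j ∈ Finset.Ico (m + 1) n, x j * D j) ^ 2)
          + 3 * (∑ m ∈ Finset.range n, P m * (h * ∑ j ∈ Finset.range m, x j) ^ 2)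
        ≤ 3 * ((4 + 4 * CS) * R * Sx) + 3 * ((1 + CS) ^ 2 * R * Sx) + 3 * (R * Sx) := by
      linarith [hT1, hT2, hT3]
    linarith [hT4]
  calc variance Z μ ≤ ∫ ω, (W ω) ^ 2 ∂μ := hvar
    _ = ∑ m ∈ Finset.range (n + 1), P m * (sval m) ^ 2 := hInt
    _ ≤ (3 * ((4 + 4 * CS) * R * Sx) + 3 * ((1 + CS) ^ 2 * R * Sx) + 3 * (R * Sx)) + R * Sx :=
        hmain
    _ ≤ 100 * (1 + CS) ^ 2 * R * Sx := by
        nlinarith [mul_nonneg hR0 hSx0, mul_nonneg (mul_nonneg hR0 hSx0) hCS,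
          mul_nonneg (mul_nonneg (mul_nonneg hR0 hSx0) hCS) hCS]
    _ = 100 * (1 + CS) ^ 2 * R * Sx := rfl
end

section
/- Define F_base : [0,1] → ℝ by F_base(p) = (9/8)·p for 0 ≤ p ≤ 1/3, F_base(p) = 1/(4(1−p)) for 1/3 ≤ p ≤ 1/2, F_base(p) = 1/2 for 1/2 ≤ p < 1, and F_base(1) = 1. Then the two formulas agree at p = 1/3 and at p = 1/2, F_base is nondecreasing on [0,1] with values in [0,1], and the utility u(p) = (1−p)·F_base(p) satisfies u(p) ≤ 1/4 for every p ∈ [0,1], with u(p) = 1/4 if and only if p ∈ [1/3, 1/2]. -/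
/-- The flat baseline buyer CDF of the lower-bound construction. -/
noncomputable def Fbase (p : ℝ) : ℝ :=
  if p ≤ 1 / 3 then 9 / 8 * p
  else if p ≤ 1 / 2 then 1 / (4 * (1 - p))
  else if p < 1 then 1 / 2
  else 1

lemma flat_mid_eq {p : ℝ} (h : p ≤ 1/2) : (1 - p) * (1 / (4 * (1 - p))) = 1/4 := by
  have hne : (1:ℝ) - p ≠ 0 := by intro h'; nlinarith [h', h]
  field_simp

/-- **Flat baseline instance.**
The two defining formulas agree at `p = 1/3` and `p = 1/2`, `F_base` is a
nondecreasing `[0,1]`-valued function on `[0,1]`, and the utility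
`u(p) = (1−p)·F_base(p)` satisfies `u(p) ≤ 1/4` on `[0,1]`, with equality
exactly on the hard interval `[1/3, 1/2]`. -/
theorem flat_baseline_instance :
    (9 / 8 * (1 / 3 : ℝ) = 1 / (4 * (1 - 1 / 3 : ℝ)) ∧
      1 / (4 * (1 - 1 / 2 : ℝ)) = 1 / 2) ∧
    MonotoneOn Fbase (Set.Icc 0 1) ∧
    (∀ p ∈ Set.Icc (0:ℝ) 1, Fbase p ∈ Set.Icc (0:ℝ) 1) ∧
    (∀ p ∈ Set.Icc (0:ℝ) 1, (1 - p) * Fbase p ≤ 1 / 4) ∧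
    (∀ p ∈ Set.Icc (0:ℝ) 1,
      ((1 - p) * Fbase p = 1 / 4 ↔ p ∈ Set.Icc (1/3 : ℝ) (1/2))) := by
  refine ⟨⟨by norm_num, by norm_num⟩, ?_, ?_, ?_, ?_⟩
  · rintro p ⟨hp0, hp1⟩ q ⟨hq0, hq1⟩ hpq
    simp only [Fbase]
    split_ifs <;> (try push_neg at *) <;>
      first
        | linarith
        | (rw [le_div_iff₀ (by linarith)]; nlinarith)
        | (rw [div_le_one (by linarith)]; linarith)
        | (rw [div_le_div_iff₀ (by linarith) (by linarith)]; nlinarith)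
  · rintro p ⟨hp0, hp1⟩
    simp only [Fbase, Set.mem_Icc]
    split_ifs with h1 h2 h3 <;> (try push_neg at *)
    · constructor <;> nlinarith
    · constructor
      · have : (0:ℝ) < 4 * (1 - p) := by linarith
        positivity
      · rw [div_le_one (by linarith)]; linarith
    · norm_num
    · norm_num
  · rintro p ⟨hp0, hp1⟩
    simp only [Fbase]
    split_ifs with h1 h2 h3 <;> (try push_neg at *)
    · nlinarith
    · exact le_of_eq (flat_mid_eq h2)
    · nlinarith
    · nlinarith
  · rintro p ⟨hp0, hp1⟩
    simp only [Fbase, Set.mem_Icc]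
    split_ifs with h1 h2 h3 <;> (try push_neg at *)
    · constructor
      · intro h; constructor <;> nlinarith
      · rintro ⟨ha, hb⟩
        have : p = 1/3 := le_antisymm h1 ha
        subst this; norm_num
    · exact ⟨fun _ => ⟨le_of_lt h1, h2⟩, fun _ => flat_mid_eq h2⟩
    · constructor
      · intro h; nlinarith
      · rintro ⟨_, hb⟩; linarith
    · constructor
      · intro h; nlinarith
      · rintro ⟨_, hb⟩; linarith
end

section
/- Let h > 0 and l be real numbers with [l, l+h] ⊆ [1/3, 1/2], and let ε be a real number with 0 ≤ ε ≤ 9h/(64(π+2)). Define F : [1/3, 1/2] → ℝ by F(p) = 1/(4(1−p)) + (ε/(1−p))·sin²(π(p−l)/h) for p ∈ [l, l+h], and F(p) = 1/(4(1−p)) for p ∈ [1/3, 1/2] \ [l, l+h]. Then F is nondecreasing on [1/3, 1/2]. -/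
open Real

private lemma base_mono' {p q : ℝ} (hpq : p ≤ q) (hq : q ≤ 1/2) :
    1 / (4 * (1 - p)) ≤ 1 / (4 * (1 - q)) := by
  have h1 : (0:ℝ) < 4 * (1 - q) := by linarith
  have h2 : 4 * (1 - q) ≤ 4 * (1 - p) := by linarith
  exact one_div_le_one_div_of_le h1 h2

noncomputable def Gfun (h l ε : ℝ) : ℝ → ℝ := fun p =>
  1 / (4 * (1 - p)) + (ε / (1 - p)) * (Real.sin (π * (p - l) / h)) ^ 2

private lemma G_hasDeriv (h l ε : ℝ) (hh : h ≠ 0) {p : ℝ} (hp : p ≠ 1) :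
    HasDerivAt (Gfun h l ε)
      (1 / (4 * (1 - p) ^ 2) + ε * (Real.sin (π * (p - l) / h)) ^ 2 / (1 - p) ^ 2
        + (ε / (1 - p)) *
          (2 * Real.sin (π * (p - l) / h) * Real.cos (π * (p - l) / h) * (π / h))) p := by
  have h1p : (1:ℝ) - p ≠ 0 := sub_ne_zero.mpr (Ne.symm hp)
  have hlin : HasDerivAt (fun x : ℝ => 1 - x) (-1) p := (hasDerivAt_id p).const_sub 1
  have hA : HasDerivAt (fun x : ℝ => 1 / (4 * (1 - x))) (1 / (4 * (1 - p) ^ 2)) p := by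
    have h2 := ((hlin.const_mul (4:ℝ)).inv (by
      exact mul_ne_zero (by norm_num) h1p))
    simp only [one_div]
    refine h2.congr_deriv ?_
    field_simp
  have hB : HasDerivAt (fun x : ℝ => ε / (1 - x)) (ε / (1 - p) ^ 2) p := by
    have h2 := (hlin.inv h1p).const_mul ε
    simp only [div_eq_mul_inv]
    refine h2.congr_deriv ?_
    field_simp
  have hu : HasDerivAt (fun x : ℝ => π * (x - l) / h) (π / h) p := by
    have := (((hasDerivAt_id p).sub_const l).const_mul π).div_const h
    simpa using this
  have hs : HasDerivAt (fun x : ℝ => Real.sin (π * (x - l) / h))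
      (Real.cos (π * (p - l) / h) * (π / h)) p := (Real.hasDerivAt_sin _).comp p hu
  have hs2 : HasDerivAt (fun x : ℝ => (Real.sin (π * (x - l) / h)) ^ 2)
      (2 * Real.sin (π * (p - l) / h) * (Real.cos (π * (p - l) / h) * (π / h))) p := by
    have := hs.pow 2
    exact this.congr_deriv (by simp)
  have htot := hA.add ((hB.mul hs2))
  refine htot.congr_deriv ?_
  field_simp
  ring

private lemma G_mono (h l ε : ℝ) (hh : 0 < h)
    (hcell : Set.Icc l (l + h) ⊆ Set.Icc (1/3 : ℝ) (1/2))
    (hε0 : 0 ≤ ε) (hε : ε ≤ 9 * h / (64 * (π + 2))) :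
    MonotoneOn (Gfun h l ε) (Set.Icc l (l + h)) := by
  have hmem : ∀ x ∈ Set.Icc l (l + h), (1:ℝ)/3 ≤ x ∧ x ≤ 1/2 := by
    intro x hx
    exact ⟨(hcell hx).1, (hcell hx).2⟩
  have hπpos : (0:ℝ) < π := Real.pi_pos
  have hkey : ε * (64 * (π + 2)) ≤ 9 * h := by
    have hpos : (0:ℝ) < 64 * (π + 2) := by positivity
    calc ε * (64 * (π + 2)) ≤ (9 * h / (64 * (π + 2))) * (64 * (π + 2)) := by
          exact mul_le_mul_of_nonneg_right hε (le_of_lt hpos)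
      _ = 9 * h := by field_simp
  apply monotoneOn_of_deriv_nonneg (convex_Icc l (l + h))
  · intro x hx
    have hx1 : x ≠ 1 := by
      have := (hmem x hx).2; intro hcon; rw [hcon] at this; norm_num at this
    exact (G_hasDeriv h l ε hh.ne' hx1).continuousAt.continuousWithinAt
  · intro x hx
    rw [interior_Icc] at hx
    have hx' : x ∈ Set.Icc l (l + h) := Set.Ioo_subset_Icc_self hx
    have hx1 : x ≠ 1 := by
      have := (hmem x hx').2; intro hcon; rw [hcon] at this; norm_num at this
    exact (G_hasDeriv h l ε hh.ne' hx1).differentiableAt.differentiableWithinAt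
  · intro x hx
    rw [interior_Icc] at hx
    have hx' : x ∈ Set.Icc l (l + h) := Set.Ioo_subset_Icc_self hx
    obtain ⟨hx3, hx2⟩ := hmem x hx'
    have hx1 : x ≠ 1 := by intro hcon; rw [hcon] at hx2; norm_num at hx2
    rw [(G_hasDeriv h l ε hh.ne' hx1).deriv]
    set s := Real.sin (π * (x - l) / h) with hs
    set c := Real.cos (π * (x - l) / h) with hc
    have hu1 : (1:ℝ)/2 ≤ 1 - x := by linarith
    have hu2 : 1 - x ≤ 2/3 := by linarith
    have hupos : (0:ℝ) < 1 - x := by linarith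
    have t1 : (9:ℝ)/16 ≤ 1 / (4 * (1 - x) ^ 2) := by
      have hb : 4 * (1 - x) ^ 2 ≤ 16/9 := by nlinarith
      have hpos : (0:ℝ) < 4 * (1 - x) ^ 2 := by positivity
      have := one_div_le_one_div_of_le hpos hb
      linarith [this]
    have t2 : 0 ≤ ε * s ^ 2 / (1 - x) ^ 2 := by positivity
    have hsc1 : s ^ 2 + c ^ 2 = 1 := Real.sin_sq_add_cos_sq _
    have hsc2 : -1 ≤ 2 * s * c := by nlinarith [sq_nonneg (s + c)]
    have hεu0 : 0 ≤ ε / (1 - x) := by positivity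
    have hεu2 : ε / (1 - x) ≤ 2 * ε := by
      rw [div_le_iff₀ hupos]; nlinarith
    have hπh : (0:ℝ) < π / h := div_pos hπpos hh
    have t3 : -(9/32 : ℝ) ≤ (ε / (1 - x)) * (2 * s * c * (π / h)) := by
      have step1 : (ε / (1 - x)) * (-(π / h)) ≤ (ε / (1 - x)) * (2 * s * c * (π / h)) := by
        apply mul_le_mul_of_nonneg_left _ hεu0
        nlinarith
      have step2 : -(2 * ε * (π / h)) ≤ (ε / (1 - x)) * (-(π / h)) := by
        have := mul_le_mul_of_nonneg_right hεu2 (le_of_lt hπh)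
        nlinarith
      have step3 : 2 * ε * (π / h) ≤ 9/32 := by
        rw [mul_div_assoc', div_le_iff₀ hh]
        nlinarith
      linarith
    linarith

private lemma Gfun_left (h l ε : ℝ) : Gfun h l ε l = 1 / (4 * (1 - l)) := by
  simp [Gfun]

private lemma Gfun_right (h l ε : ℝ) (hh : h ≠ 0) :
    Gfun h l ε (l + h) = 1 / (4 * (1 - (l + h))) := by
  have hπ : π * (l + h - l) / h = π := by field_simp; ring
  simp only [Gfun, hπ, Real.sin_pi]
  ring

/-- **Validity of the planted buyer CDF.**
Perturbing the baseline `1/(4(1−p))` on the hard interval `[1/3, 1/2]` by the bump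
`(ε/(1−p))·sin²(π(p−l)/h)` supported on a cell `[l, l+h] ⊆ [1/3, 1/2]` keeps the
function nondecreasing on `[1/3, 1/2]` whenever `0 ≤ ε ≤ 9h/(64(π+2))`. -/
theorem planted_cdf_monotone
    (h l ε : ℝ) (hh : 0 < h)
    (hcell : Set.Icc l (l + h) ⊆ Set.Icc (1/3 : ℝ) (1/2))
    (hε0 : 0 ≤ ε) (hε : ε ≤ 9 * h / (64 * (π + 2))) :
    MonotoneOn
      (fun p : ℝ =>
        if p ∈ Set.Icc l (l + h) then
          1 / (4 * (1 - p)) + (ε / (1 - p)) * (Real.sin (π * (p - l) / h)) ^ 2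
        else 1 / (4 * (1 - p)))
      (Set.Icc (1/3 : ℝ) (1/2)) := by
  have hGmono := G_mono h l ε hh hcell hε0 hε
  have hlmem : l ∈ Set.Icc l (l + h) := ⟨le_refl l, by linarith⟩
  have hrmem : l + h ∈ Set.Icc l (l + h) := ⟨by linarith, le_refl (l + h)⟩
  intro p hp q hq hpq
  by_cases hpI : p ∈ Set.Icc l (l + h) <;> by_cases hqI : q ∈ Set.Icc l (l + h)
  · simp only [if_pos hpI, if_pos hqI]
    exact hGmono hpI hqI hpq
  · -- p in cell, q not: q > l + h
    have hqgt : l + h < q := by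
      by_contra hcon
      exact hqI ⟨le_trans hpI.1 hpq, le_of_not_gt hcon⟩
    simp only [if_pos hpI, if_neg hqI]
    have step1 : Gfun h l ε p ≤ Gfun h l ε (l + h) := hGmono hpI hrmem hpI.2
    rw [Gfun_right h l ε hh.ne'] at step1
    have step2 : 1 / (4 * (1 - (l + h))) ≤ 1 / (4 * (1 - q)) :=
      base_mono' (le_of_lt hqgt) hq.2
    calc 1 / (4 * (1 - p)) + (ε / (1 - p)) * (Real.sin (π * (p - l) / h)) ^ 2
        = Gfun h l ε p := rfl
      _ ≤ 1 / (4 * (1 - (l + h))) := step1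
      _ ≤ 1 / (4 * (1 - q)) := step2
  · -- q in cell, p not: p < l
    have hplt : p < l := by
      by_contra hcon
      exact hpI ⟨le_of_not_gt hcon, le_trans hpq hqI.2⟩
    simp only [if_neg hpI, if_pos hqI]
    have step1 : 1 / (4 * (1 - p)) ≤ 1 / (4 * (1 - l)) :=
      base_mono' (le_of_lt hplt) (hcell hlmem).2
    have step2 : Gfun h l ε l ≤ Gfun h l ε q := hGmono hlmem hqI hqI.1
    rw [Gfun_left h l ε] at step2
    calc 1 / (4 * (1 - p)) ≤ 1 / (4 * (1 - l)) := step1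
      _ ≤ Gfun h l ε q := step2
      _ = 1 / (4 * (1 - q)) + (ε / (1 - q)) * (Real.sin (π * (q - l) / h)) ^ 2 := rfl
  · simp only [if_neg hpI, if_neg hqI]
    exact base_mono' hpq hq.2
end
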